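/- arXiv:2602.14739 — 5 statements merged into one kernel-verified Lean document; each statement's English description precedes it below -/
import Mathlib

section
/- Let $n \geq 1$ and let $f_{ij}$, $c_{ijk}$ be smooth functions on an open set of $\mathbb{R}^n$ (indices in $\{1,\dots,n\}$), with $(f_{ij})$ symmetric and satisfying $c_{ijk} = \tfrac{1}{3}(\partial_j f_{ik} - \partial_k f_{ij})$. Suppose smooth functions $V^i$ satisfy (a) $f_{im}\,\partial_j V^m = f_{jm}\,\partial_i V^m$ for all $i,j$, and (b) $f_{ks}\,\partial_i\partial_j V^k = c_{smj}\,\partial_i V^m + c_{smi}\,\partial_j V^m$ for all $i,j,s$. Then the cyclic condition $c_{mkl}\,\partial_i V^m + c_{mik}\,\partial_l V^m + c_{mli}\,\partial_k V^m = 0$ holds for all $i,k,l$. -/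
/-- Partial derivative `∂ₖ` of a scalar function on `ℝⁿ`. -/
noncomputable def pd {n : ℕ} (f : (Fin n → ℝ) → ℝ) (k : Fin n) (u : Fin n → ℝ) : ℝ :=
  fderiv ℝ f u (Pi.single k 1)

/-- If two functions agree on an open set, their partial derivatives agree there. -/
lemma pd_eqOn {n : ℕ} {g h : (Fin n → ℝ) → ℝ} {U : Set (Fin n → ℝ)} (hU : IsOpen U)
    (he : Set.EqOn g h U) {u : Fin n → ℝ} (hu : u ∈ U) (k : Fin n) :
    pd g k u = pd h k u := by
  unfold pd
  rw [Filter.EventuallyEq.fderiv_eq (Filter.eventuallyEq_of_mem (hU.mem_nhds hu) he)]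

/-- Partial derivative of a finite sum. -/
lemma pd_sum {n : ℕ} {F : Fin n → (Fin n → ℝ) → ℝ} {u : Fin n → ℝ}
    (hd : ∀ m, DifferentiableAt ℝ (F m) u) (k : Fin n) :
    pd (fun v => ∑ m, F m v) k u = ∑ m, pd (F m) k u := by
  unfold pd
  rw [fderiv_fun_sum (fun m _ => hd m)]
  simp

/-- Leibniz rule for `pd`. -/
lemma pd_mul {n : ℕ} {g h : (Fin n → ℝ) → ℝ} {u : Fin n → ℝ}
    (hg : DifferentiableAt ℝ g u) (hh : DifferentiableAt ℝ h u) (k : Fin n) :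
    pd (fun v => g v * h v) k u = g u * pd h k u + h u * pd g k u := by
  unfold pd
  rw [fderiv_fun_mul hg hh]
  simp

/-- for a symmetric `f` with `c_{ijk} = (1/3)(∂_j f_{ik} - ∂_k f_{ij})`,
conditions (e1) and (e2) for a system `V` imply the cyclic condition (e3). -/
theorem redundant_condition_third_order_hamiltonian
    (n : ℕ) (hn : 1 ≤ n)
    (U : Set (Fin n → ℝ)) (hU : IsOpen U)
    (f : Fin n → Fin n → (Fin n → ℝ) → ℝ)
    (c : Fin n → Fin n → Fin n → (Fin n → ℝ) → ℝ)
    (V : Fin n → (Fin n → ℝ) → ℝ)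
    (hfs : ∀ i j, ContDiffOn ℝ (⊤ : ℕ∞) (f i j) U)
    (hcs : ∀ i j k, ContDiffOn ℝ (⊤ : ℕ∞) (c i j k) U)
    (hVs : ∀ i, ContDiffOn ℝ (⊤ : ℕ∞) (V i) U)
    (hsym : ∀ i j, ∀ u ∈ U, f i j u = f j i u)
    (hc : ∀ i j k, ∀ u ∈ U,
      c i j k u = (1/3) * (pd (f i k) j u - pd (f i j) k u))
    (ha : ∀ i j, ∀ u ∈ U,
      ∑ m, f i m u * pd (V m) j u = ∑ m, f j m u * pd (V m) i u)
    (hb : ∀ i j s, ∀ u ∈ U,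
      ∑ k, f k s u * pd (fun v => pd (V k) j v) i u
        = ∑ m, (c s m j u * pd (V m) i u + c s m i u * pd (V m) j u)) :
    ∀ i k l, ∀ u ∈ U,
      ∑ m, (c m k l u * pd (V m) i u + c m i k u * pd (V m) l u
            + c m l i u * pd (V m) k u) = 0 := by
  intro i k l u hu
  have memU : U ∈ nhds u := hU.mem_nhds hu
  -- basic differentiability facts at u
  have df : ∀ a b, DifferentiableAt ℝ (f a b) u := fun a b =>
    ((hfs a b).contDiffAt memU).differentiableAt (by simp)
  have dV : ∀ m j, DifferentiableAt ℝ (fun v => pd (V m) j v) u := by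
    intro m j
    have h1 : ContDiffAt ℝ (⊤ : ℕ∞) (fderiv ℝ (V m)) u :=
      ((hVs m).contDiffAt memU).fderiv_right (by simp)
    have h2 : ContDiffAt ℝ (⊤ : ℕ∞) (fun v => fderiv ℝ (V m) v (Pi.single j 1)) u :=
      h1.clm_apply contDiffAt_const
    exact h2.differentiableAt (by simp)
  -- pointwise versions of the hypotheses
  have hc' : ∀ a b d, c a b d u = (1/3) * (pd (f a d) b u - pd (f a b) d u) :=
    fun a b d => hc a b d u hu
  have hD : ∀ a b d, pd (f a b) d u = pd (f b a) d u :=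
    fun a b d => pd_eqOn hU (fun v hv => hsym a b v hv) hu d
  -- condition (b) with the first factor transposed using symmetry of f
  have hb' : ∀ s p q, ∑ m, f s m u * pd (fun v => pd (V m) p v) q u
      = ∑ m, (c s m p u * pd (V m) q u + c s m q u * pd (V m) p u) := by
    intro s p q
    rw [← hb q p s u hu]
    exact Finset.sum_congr rfl fun m _ => by rw [hsym s m u hu]
  -- expansion of the derivative of a row of condition (a)
  have hL : ∀ a b d, pd (fun v => ∑ m, f a m v * pd (V m) b v) d u
      = ∑ m, (pd (f a m) d u * pd (V m) b u
          + f a m u * pd (fun v => pd (V m) b v) d u) := by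
    intro a b d
    rw [pd_sum (F := fun m v => f a m v * pd (V m) b v) (fun m => (df a m).mul (dV m b)) d]
    exact Finset.sum_congr rfl fun m _ => by
      rw [pd_mul (df a m) (dV m b) d]; ring
  -- differentiated condition (a)
  have h2 : ∀ a b d,
      ∑ m, (pd (f a m) d u * pd (V m) b u
          + f a m u * pd (fun v => pd (V m) b v) d u)
      = ∑ m, (pd (f b m) d u * pd (V m) a u
          + f b m u * pd (fun v => pd (V m) a v) d u) := by
    intro a b d
    rw [← hL a b d, ← hL b a d]
    exact pd_eqOn hU (fun v hv => ha a b v hv) hu d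
  -- the key sum identity: each "E" expression vanishes
  have hsum : ∀ a b d,
      ∑ m, (pd (f a m) d u * pd (V m) b u + c a m b u * pd (V m) d u
          + c a m d u * pd (V m) b u)
      = ∑ m, (pd (f a m) d u * pd (V m) b u
          + f a m u * pd (fun v => pd (V m) b v) d u) := by
    intro a b d
    calc ∑ m, (pd (f a m) d u * pd (V m) b u + c a m b u * pd (V m) d u
            + c a m d u * pd (V m) b u)
        = ∑ m, (pd (f a m) d u * pd (V m) b u
            + (c a m b u * pd (V m) d u + c a m d u * pd (V m) b u)) :=
          Finset.sum_congr rfl fun m _ => by ring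
      _ = ∑ m, pd (f a m) d u * pd (V m) b u
            + ∑ m, (c a m b u * pd (V m) d u + c a m d u * pd (V m) b u) :=
          Finset.sum_add_distrib
      _ = ∑ m, pd (f a m) d u * pd (V m) b u
            + ∑ m, f a m u * pd (fun v => pd (V m) b v) d u := by rw [hb' a b d]
      _ = ∑ m, (pd (f a m) d u * pd (V m) b u
            + f a m u * pd (fun v => pd (V m) b v) d u) := Finset.sum_add_distrib.symm
  have hE3 : ∀ a b d,
      ∑ m, ((pd (f a m) d u * pd (V m) b u + c a m b u * pd (V m) d u
          + c a m d u * pd (V m) b u)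
        - (pd (f b m) d u * pd (V m) a u + c b m a u * pd (V m) d u
          + c b m d u * pd (V m) a u)) = 0 := by
    intro a b d
    rw [Finset.sum_sub_distrib, hsum a b d, hsum b a d, h2 a b d, sub_self]
  -- termwise identity: the goal summand is a combination of three E-summands
  have key : ∀ m ∈ (Finset.univ : Finset (Fin n)),
      c m k l u * pd (V m) i u + c m i k u * pd (V m) l u + c m l i u * pd (V m) k u
      = (1/3) * (
        ((pd (f i m) l u * pd (V m) k u + c i m k u * pd (V m) l u
            + c i m l u * pd (V m) k u)
          - (pd (f k m) l u * pd (V m) i u + c k m i u * pd (V m) l u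
            + c k m l u * pd (V m) i u))
        + ((pd (f k m) i u * pd (V m) l u + c k m l u * pd (V m) i u
            + c k m i u * pd (V m) l u)
          - (pd (f l m) i u * pd (V m) k u + c l m k u * pd (V m) i u
            + c l m i u * pd (V m) k u))
        + ((pd (f l m) k u * pd (V m) i u + c l m i u * pd (V m) k u
            + c l m k u * pd (V m) i u)
          - (pd (f i m) k u * pd (V m) l u + c i m l u * pd (V m) k u
            + c i m k u * pd (V m) l u))) := by
    intro m _
    simp only [hc']
    rw [hD m k l, hD m l k, hD m k i, hD m i k, hD m i l, hD m l i,
        hD k i m, hD l k m, hD l i m]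
    ring
  rw [Finset.sum_congr rfl key, ← Finset.mul_sum]
  have hz : ∑ m, (
        ((pd (f i m) l u * pd (V m) k u + c i m k u * pd (V m) l u
            + c i m l u * pd (V m) k u)
          - (pd (f k m) l u * pd (V m) i u + c k m i u * pd (V m) l u
            + c k m l u * pd (V m) i u))
        + ((pd (f k m) i u * pd (V m) l u + c k m l u * pd (V m) i u
            + c k m i u * pd (V m) l u)
          - (pd (f l m) i u * pd (V m) k u + c l m k u * pd (V m) i u
            + c l m i u * pd (V m) k u))
        + ((pd (f l m) k u * pd (V m) i u + c l m i u * pd (V m) k u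
            + c l m k u * pd (V m) i u)
          - (pd (f i m) k u * pd (V m) l u + c i m l u * pd (V m) k u
            + c i m k u * pd (V m) l u))) = 0 := by
    rw [Finset.sum_add_distrib, Finset.sum_add_distrib,
        hE3 i k l, hE3 k l i, hE3 l i k]
    ring
  rw [hz, mul_zero]
end

section
/- Fix $n \geq 1$ and a finite index set for Greek indices. Let $\phi_{\alpha\beta}$ be a constant symmetric invertible matrix, and let $\psi^\gamma_k(u) = \psi^\gamma_{ks} u^s + \omega^\gamma_k$ with constants $\psi^\gamma_{ij} = -\psi^\gamma_{ji}$ and $\omega^\gamma_k$, such that $(\psi^\gamma_i(u))$ is invertible for $u$ in an open set $U$, with inverse $(\psi^i_\gamma(u))$. Define $f_{ij} = \phi_{\alpha\beta}\psi^\alpha_i\psi^\beta_j$. Suppose the constants satisfy $\phi_{\beta\gamma}(\psi^\beta_{il}\psi^\gamma_{jk} + \psi^\beta_{jl}\psi^\gamma_{ki} + \psi^\beta_{kl}\psi^\gamma_{ij}) = 0$ and $\phi_{\beta\gamma}(\omega^\beta_i \psi^\gamma_{jk} + \omega^\beta_j \psi^\gamma_{ki} + \omega^\beta_k \psi^\gamma_{ij})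 = 0$. Then $f_{ij}$ is symmetric in $i,j$ and satisfies the Monge condition $\partial_i f_{jk} + \partial_j f_{ki} + \partial_k f_{ij} = 0$ on $U$. -/
/-- the factorized form `f = Ψ Φ Ψᵀ` with the algebraic constraints (2.6)
on the constants produces a symmetric metric satisfying the Monge condition
`∂_i f_{jk} + ∂_j f_{ki} + ∂_k f_{ij} = 0`. -/
theorem factorized_Monge_metric
    (n : ℕ) (hn : 1 ≤ n)
    (U : Set (Fin n → ℝ)) (hU : IsOpen U)
    (φ φinv : Fin n → Fin n → ℝ)
    (ψc : Fin n → Fin n → Fin n → ℝ)  -- ψ^γ_{ks}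
    (ω : Fin n → Fin n → ℝ)            -- ω^γ_k
    (ψf : Fin n → Fin n → (Fin n → ℝ) → ℝ)
    (ψinv : Fin n → Fin n → (Fin n → ℝ) → ℝ)
    (f : Fin n → Fin n → (Fin n → ℝ) → ℝ)
    (hφsym : ∀ α β, φ α β = φ β α)
    (hφinv : ∀ α β, ∑ γ, φ α γ * φinv γ β = if α = β then (1:ℝ) else 0)
    (hψcskew : ∀ γ i j, ψc γ i j = -ψc γ j i)
    -- ψ^γ_k(u) = ψ^γ_{ks} u^s + ω^γ_k
    (hψf : ∀ γ k u, ψf γ k u = (∑ s, ψc γ k s * u s) + ω γ k)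
    -- (ψ^γ_i(u)) is invertible on U with inverse (ψ^i_γ(u))
    (hψinv : ∀ γ i, ∀ u ∈ U, ∑ k, ψf γ k u * ψinv k i u = if γ = i then (1:ℝ) else 0)
    (hψinv' : ∀ i γ, ∀ u ∈ U, ∑ k, ψinv i k u * ψf k γ u = if i = γ then (1:ℝ) else 0)
    -- f_{ij} = φ_{αβ} ψ^α_i ψ^β_j
    (hf : ∀ i j u, f i j u = ∑ α, ∑ β, φ α β * ψf α i u * ψf β j u)
    -- constraints (2.6a) and (2.6b)
    (h18a : ∀ i j k l,
      ∑ β, ∑ γ, φ β γ * (ψc β i l * ψc γ j k + ψc β j l * ψc γ k i + ψc β k l * ψc γ i j) = 0)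
    (h18b : ∀ i j k,
      ∑ β, ∑ γ, φ β γ * (ω β i * ψc γ j k + ω β j * ψc γ k i + ω β k * ψc γ i j) = 0) :
    (∀ i j, ∀ u ∈ U, f i j u = f j i u)
    ∧ (∀ i j k, ∀ u ∈ U,
        pd (f j k) i u + pd (f k i) j u + pd (f i j) k u = 0) := by
  classical
  -- derivative of ψf and the resulting formula for pd (f j k) i u
  have key : ∀ (j k i : Fin n) (u : Fin n → ℝ),
      pd (f j k) i u
        = ∑ α, ∑ β, (φ α β * ψc α j i * ψf β k u + φ α β * ψf α j u * ψc β k i) := by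
    intro j k i u
    set L : Fin n → Fin n → (Fin n → ℝ) →L[ℝ] ℝ :=
      fun γ m => ∑ s, ψc γ m s • ContinuousLinearMap.proj (R := ℝ) (φ := fun _ : Fin n => ℝ) s
      with hL
    have hψd : ∀ γ m, HasFDerivAt (ψf γ m) (L γ m) u := by
      intro γ m
      have he : (fun v : Fin n → ℝ => (∑ s, ψc γ m s * v s) + ω γ m) = ψf γ m := by
        funext v; rw [hψf]
      rw [← he]
      apply HasFDerivAt.add_const
      have := HasFDerivAt.fun_sum (u := (Finset.univ : Finset (Fin n)))
        (fun s _ => ((ContinuousLinearMap.proj (R := ℝ) (φ := fun _ : Fin n => ℝ) s).hasFDerivAt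
            (x := u)).const_mul (ψc γ m s))
      simpa [hL] using this
    have hD : HasFDerivAt (f j k)
        (∑ α, ∑ β, ((φ α β * ψf α j u) • L β k + ψf β k u • ((φ α β) • L α j))) u := by
      have he : (fun v => ∑ α, ∑ β, φ α β * ψf α j v * ψf β k v) = f j k := by
        funext v; rw [hf]
      rw [← he]
      apply HasFDerivAt.fun_sum; intro α _
      apply HasFDerivAt.fun_sum; intro β _
      exact ((hψd α j).const_mul (φ α β)).mul (hψd β k)
    have hLapp : ∀ γ m, (L γ m) (Pi.single i 1) = ψc γ m i := by
      intro γ m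
      simp [hL, ContinuousLinearMap.sum_apply, Pi.single_apply, mul_ite,
        Finset.sum_ite_eq]
    rw [pd, hD.fderiv]
    simp only [ContinuousLinearMap.sum_apply, ContinuousLinearMap.add_apply,
      ContinuousLinearMap.smul_apply, hLapp, smul_eq_mul]
    apply Finset.sum_congr rfl; intro α _
    apply Finset.sum_congr rfl; intro β _
    ring
  -- swapping Greek indices under the double sum using symmetry of φ
  have swap : ∀ g : Fin n → Fin n → ℝ,
      (∑ α, ∑ β, φ α β * g α β) = ∑ α, ∑ β, φ α β * g β α := by
    intro g
    rw [Finset.sum_comm]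
    exact Finset.sum_congr rfl fun β _ => Finset.sum_congr rfl fun α _ => by rw [hφsym]
  constructor
  · intro i j u _
    rw [hf, hf, Finset.sum_comm]
    exact Finset.sum_congr rfl fun β _ => Finset.sum_congr rfl fun α _ => by
      rw [hφsym]; ring
  · intro i j k u _
    rw [key j k i u, key k i j u, key i j k u]
    have e1 : (∑ α, ∑ β, (φ α β * ψc α j i * ψf β k u + φ α β * ψf α j u * ψc β k i))
        = ∑ α, ∑ β, (φ α β * ψc α j i * ψf β k u + φ α β * ψc α k i * ψf β j u) := by
      simp only [Finset.sum_add_distrib]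
      rw [show (∑ α, ∑ β, φ α β * ψf α j u * ψc β k i)
            = ∑ α, ∑ β, φ α β * (ψf α j u * ψc β k i) by
          simp only [mul_assoc],
        swap (fun α β => ψf α j u * ψc β k i)]
      congr 1
      apply Finset.sum_congr rfl; intro α _
      apply Finset.sum_congr rfl; intro β _
      ring
    have e2 : (∑ α, ∑ β, (φ α β * ψc α k j * ψf β i u + φ α β * ψf α k u * ψc β i j))
        = ∑ α, ∑ β, (φ α β * ψc α k j * ψf β i u + φ α β * ψc α i j * ψf β k u) := by
      simp only [Finset.sum_add_distrib]
      rw [show (∑ α, ∑ β, φ α β * ψf α k u * ψc β i j)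
            = ∑ α, ∑ β, φ α β * (ψf α k u * ψc β i j) by
          simp only [mul_assoc],
        swap (fun α β => ψf α k u * ψc β i j)]
      congr 1
      apply Finset.sum_congr rfl; intro α _
      apply Finset.sum_congr rfl; intro β _
      ring
    have e3 : (∑ α, ∑ β, (φ α β * ψc α i k * ψf β j u + φ α β * ψf α i u * ψc β j k))
        = ∑ α, ∑ β, (φ α β * ψc α i k * ψf β j u + φ α β * ψc α j k * ψf β i u) := by
      simp only [Finset.sum_add_distrib]
      rw [show (∑ α, ∑ β, φ α β * ψf α i u * ψc β j k)
            = ∑ α, ∑ β, φ α β * (ψf α i u * ψc β j k) by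
          simp only [mul_assoc],
        swap (fun α β => ψf α i u * ψc β j k)]
      congr 1
      apply Finset.sum_congr rfl; intro α _
      apply Finset.sum_congr rfl; intro β _
      ring
    rw [e1, e2, e3]
    simp only [← Finset.sum_add_distrib]
    apply Finset.sum_eq_zero; intro α _
    apply Finset.sum_eq_zero; intro β _
    rw [hψcskew α j i, hψcskew α k j, hψcskew α i k]
    ring
end

section
/- Let $n \geq 1$ and let smooth functions $f^{ij}$, $c^{ij}_k$ on an open set of $\mathbb{R}^n$ satisfy the four Hamiltonian conditions: $\partial_k f^{ij} = c^{ij}_k + c^{ji}_k$; $c^{ij}_k f^{kp} = -c^{pj}_k f^{ki}$; $c^{ij}_k f^{kp} + c^{jp}_k f^{ki} + c^{pi}_k f^{kj} = 0$; $\partial_l c^{ij}_k\, f^{kp} = c^{ip}_k c^{kj}_l - c^{pi}_k c^{kj}_l - c^{pj}_k c^{ik}_l - c^{pj}_k c^{ki}_l$, with $(f^{ij})$ invertible (inverse $(f_{ij})$, $(f_{ij})$ symmetric). Suppose smooth functions $\Gamma^{ij}_k$ and $w^i_{\alpha k}$, together with symmetric constants $c^{\alpha\beta}$, satisfy: $\Gamma^{ij}_k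 f^{kp} = \Gamma^{pj}_k f^{ki}$ and $(\partial_l \Gamma^{ij}_k + c^{\alpha\beta} w^i_{\alpha k} w^j_{\beta l}) f^{kp} = \Gamma^{pj}_k c^{ki}_l - \Gamma^{kj}_l c^{pi}_k$. Define $R^{ijp}_{lm} = -\partial_l\Gamma^{ij}_k\,c^{kp}_m + \partial_l\Gamma^{pj}_k\,c^{ki}_m - \Gamma^{kj}_l\,\partial_m c^{pi}_k + \Gamma^{kj}_l\,\partial_k c^{pi}_m + c^{\alpha\beta}(c^{ki}_l w^p_{\alpha k} w^j_{\beta m} - c^{kp}_l w^i_{\alpha k} w^j_{\beta m})$. Then $R^{ijp}_{lm} + R^{ijp}_{ml} = 0$ for all $i,j,p,l,m$. -/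
noncomputable def rrM {n : ℕ} (F : Fin n → Fin n → ℝ) (C : Fin n → Fin n → Fin n → ℝ)
    (i j p : Fin n) : ℝ := ∑ k, C i j k * F k p

noncomputable def rrE {n : ℕ} (G : Fin n → Fin n → ℝ) (C : Fin n → Fin n → Fin n → ℝ)
    (p q m : Fin n) : ℝ := ∑ k, G q k * C k p m

noncomputable def rrGam {n : ℕ} (G : Fin n → Fin n → ℝ) (Ga : Fin n → Fin n → Fin n → ℝ)
    (a j l : Fin n) : ℝ := ∑ k, G a k * Ga k j l

noncomputable def rrD {n : ℕ} (G : Fin n → Fin n → ℝ) (C : Fin n → Fin n → Fin n → ℝ)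
    (p q m : Fin n) : ℝ := ∑ k, G q k * C p k m

section rrlemmas
variable {n : ℕ} (F G : Fin n → Fin n → ℝ) (C : Fin n → Fin n → Fin n → ℝ)

lemma rr_extract' (hFG : ∀ i j, ∑ k, F i k * G k j = if i = j then (1:ℝ) else 0)
    (a : Fin n → ℝ) (q : Fin n) :
    a q = ∑ p, (∑ k, a k * F k p) * G p q := by
  have h1 : ∑ p, (∑ k, a k * F k p) * G p q = ∑ k, a k * ∑ p, F k p * G p q := by
    simp only [Finset.sum_mul, Finset.mul_sum, mul_assoc]
    exact Finset.sum_comm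
  rw [h1]
  simp only [hFG, mul_ite, mul_one, mul_zero]
  rw [Finset.sum_ite_eq' Finset.univ q a]
  simp

lemma rrM_anti (hM : ∀ i j p, ∑ k, C i j k * F k p = -∑ k, C p j k * F k i)
    (i j p : Fin n) : rrM F C i j p = - rrM F C p j i := hM i j p

lemma rrM_mid (hM : ∀ i j p, ∑ k, C i j k * F k p = -∑ k, C p j k * F k i)
    (hcyc : ∀ i j p, ∑ k, (C i j k * F k p + C j p k * F k i + C p i k * F k j) = 0)
    (x q y : Fin n) : rrM F C x q y = rrM F C x y q - rrM F C y x q := by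
  have hc := hcyc x q y
  rw [Finset.sum_add_distrib, Finset.sum_add_distrib] at hc
  have h1 : rrM F C q y x = - rrM F C x y q := rrM_anti F C hM q y x
  have h2 : rrM F C x q y + rrM F C q y x + rrM F C y x q = 0 := hc
  linarith

lemma rr_recC (hFG : ∀ i j, ∑ k, F i k * G k j = if i = j then (1:ℝ) else 0)
    (x y k : Fin n) : C x y k = ∑ t, rrM F C x y t * G t k := by
  have h1 : ∑ t, rrM F C x y t * G t k = ∑ s, C x y s * ∑ t, F s t * G t k := by
    simp only [rrM, Finset.sum_mul, Finset.mul_sum, mul_assoc]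
    exact Finset.sum_comm
  rw [h1]
  simp only [hFG, mul_ite, mul_one, mul_zero]
  rw [Finset.sum_ite_eq' Finset.univ k (fun s => C x y s)]
  simp

lemma rr_nfD (hFG : ∀ i j, ∑ k, F i k * G k j = if i = j then (1:ℝ) else 0)
    (hGsym : ∀ i j, G i j = G j i)
    (x y z m : Fin n) :
    ∑ t, rrM F C x y t * rrD G C z t m
      = ∑ k, ∑ u, G m k * rrM F C z u k * (∑ s, rrM F C x y s * G s u) := by
  calc ∑ t, rrM F C x y t * rrD G C z t m
      = ∑ t, ∑ k, rrM F C x y t * (G t k * C z k m) := by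
        refine Finset.sum_congr rfl fun t _ => ?_; rw [rrD, Finset.mul_sum]
    _ = ∑ k, ∑ t, rrM F C x y t * (G t k * C z k m) := Finset.sum_comm
    _ = ∑ k, (∑ t, rrM F C x y t * G t k) * C z k m := by
        refine Finset.sum_congr rfl fun k _ => ?_
        rw [Finset.sum_mul]; exact Finset.sum_congr rfl fun t _ => by ring
    _ = ∑ k, (∑ t, rrM F C x y t * G t k) * (∑ u, rrM F C z k u * G u m) := by
        refine Finset.sum_congr rfl fun k _ => ?_
        rw [← rr_recC F G C hFG z k m]
    _ = ∑ k, ∑ u, (∑ t, rrM F C x y t * G t k) * (rrM F C z k u * G u m) := by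
        refine Finset.sum_congr rfl fun k _ => ?_; rw [Finset.mul_sum]
    _ = ∑ u, ∑ k, (∑ t, rrM F C x y t * G t k) * (rrM F C z k u * G u m) := Finset.sum_comm
    _ = ∑ k, ∑ u, G m k * rrM F C z u k * (∑ s, rrM F C x y s * G s u) := by
        refine Finset.sum_congr rfl fun k _ => Finset.sum_congr rfl fun u _ => ?_
        rw [hGsym m k]; ring

lemma rr_nfE (hFG : ∀ i j, ∑ k, F i k * G k j = if i = j then (1:ℝ) else 0)
    (hGsym : ∀ i j, G i j = G j i)
    (x y z m : Fin n) :
    ∑ t, rrM F C x y t * rrE G C z t m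
      = ∑ k, ∑ u, G m k * rrM F C u z k * (∑ s, rrM F C x y s * G s u) := by
  calc ∑ t, rrM F C x y t * rrE G C z t m
      = ∑ t, ∑ k, rrM F C x y t * (G t k * C k z m) := by
        refine Finset.sum_congr rfl fun t _ => ?_; rw [rrE, Finset.mul_sum]
    _ = ∑ k, ∑ t, rrM F C x y t * (G t k * C k z m) := Finset.sum_comm
    _ = ∑ k, (∑ t, rrM F C x y t * G t k) * C k z m := by
        refine Finset.sum_congr rfl fun k _ => ?_
        rw [Finset.sum_mul]; exact Finset.sum_congr rfl fun t _ => by ring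
    _ = ∑ k, (∑ t, rrM F C x y t * G t k) * (∑ u, rrM F C k z u * G u m) := by
        refine Finset.sum_congr rfl fun k _ => ?_
        rw [← rr_recC F G C hFG k z m]
    _ = ∑ k, ∑ u, (∑ t, rrM F C x y t * G t k) * (rrM F C k z u * G u m) := by
        refine Finset.sum_congr rfl fun k _ => ?_; rw [Finset.mul_sum]
    _ = ∑ u, ∑ k, (∑ t, rrM F C x y t * G t k) * (rrM F C k z u * G u m) := Finset.sum_comm
    _ = ∑ k, ∑ u, G m k * rrM F C u z k * (∑ s, rrM F C x y s * G s u) := by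
        refine Finset.sum_congr rfl fun k _ => Finset.sum_congr rfl fun u _ => ?_
        rw [hGsym m k]; ring

lemma rr_lhsD (hFG : ∀ i j, ∑ k, F i k * G k j = if i = j then (1:ℝ) else 0)
    (hGsym : ∀ i j, G i j = G j i)
    (z m : Fin n) (A : Fin n → ℝ) :
    ∑ s, rrD G C z m s * A s
      = ∑ k, ∑ u, G m k * rrM F C z k u * (∑ s, G u s * A s) := by
  calc ∑ s, rrD G C z m s * A s
      = ∑ s, ∑ k, G m k * C z k s * A s := by
        refine Finset.sum_congr rfl fun s _ => ?_; rw [rrD, Finset.sum_mul]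
    _ = ∑ k, ∑ s, G m k * C z k s * A s := Finset.sum_comm
    _ = ∑ k, ∑ s, ∑ u, G m k * (rrM F C z k u * G u s) * A s := by
        refine Finset.sum_congr rfl fun k _ => Finset.sum_congr rfl fun s _ => ?_
        rw [rr_recC F G C hFG z k s, Finset.mul_sum, Finset.sum_mul]
    _ = ∑ k, ∑ u, ∑ s, G m k * (rrM F C z k u * G u s) * A s := by
        exact Finset.sum_congr rfl fun k _ => Finset.sum_comm
    _ = ∑ k, ∑ u, G m k * rrM F C z k u * (∑ s, G u s * A s) := by
        refine Finset.sum_congr rfl fun k _ => Finset.sum_congr rfl fun u _ => ?_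
        rw [Finset.mul_sum]; exact Finset.sum_congr rfl fun s _ => by ring

lemma rr_lhsE (hFG : ∀ i j, ∑ k, F i k * G k j = if i = j then (1:ℝ) else 0)
    (hGsym : ∀ i j, G i j = G j i)
    (z m : Fin n) (A : Fin n → ℝ) :
    ∑ s, rrE G C z m s * A s
      = ∑ k, ∑ u, G m k * rrM F C k z u * (∑ s, G u s * A s) := by
  calc ∑ s, rrE G C z m s * A s
      = ∑ s, ∑ k, G m k * C k z s * A s := by
        refine Finset.sum_congr rfl fun s _ => ?_; rw [rrE, Finset.sum_mul]
    _ = ∑ k, ∑ s, G m k * C k z s * A s := Finset.sum_comm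
    _ = ∑ k, ∑ s, ∑ u, G m k * (rrM F C k z u * G u s) * A s := by
        refine Finset.sum_congr rfl fun k _ => Finset.sum_congr rfl fun s _ => ?_
        rw [rr_recC F G C hFG k z s, Finset.mul_sum, Finset.sum_mul]
    _ = ∑ k, ∑ u, ∑ s, G m k * (rrM F C k z u * G u s) * A s := by
        exact Finset.sum_congr rfl fun k _ => Finset.sum_comm
    _ = ∑ k, ∑ u, G m k * rrM F C k z u * (∑ s, G u s * A s) := by
        refine Finset.sum_congr rfl fun k _ => Finset.sum_congr rfl fun u _ => ?_
        rw [Finset.mul_sum]; exact Finset.sum_congr rfl fun s _ => by ring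


lemma rr_g3t1 (hFG : ∀ i j, ∑ k, F i k * G k j = if i = j then (1:ℝ) else 0)
    (hGsym : ∀ i j, G i j = G j i)
    (hM : ∀ i j p, ∑ k, C i j k * F k p = -∑ k, C p j k * F k i)
    (hcyc : ∀ i j p, ∑ k, (C i j k * F k p + C j p k * F k i + C p i k * F k j) = 0)
    (i p a m : Fin n) :
    ∑ s, rrD G C p m s * rrM F C s i a
      = -(∑ t, rrM F C a i t * rrD G C p t m) + ∑ t, rrM F C a i t * rrE G C p t m := by
  have hPP : ∀ u, (∑ s, G u s * rrM F C s i a) = -(∑ s, rrM F C a i s * G s u) := by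
    intro u
    rw [← Finset.sum_neg_distrib]
    refine Finset.sum_congr rfl fun s _ => ?_
    rw [rrM_anti F C hM s i a, hGsym u s]; ring
  rw [rr_lhsD F G C hFG hGsym p m (fun s => rrM F C s i a)]
  calc ∑ k, ∑ u, G m k * rrM F C p k u * (∑ s, G u s * rrM F C s i a)
      = ∑ k, ∑ u, (-(G m k * rrM F C p u k * (∑ s, rrM F C a i s * G s u))
          + G m k * rrM F C u p k * (∑ s, rrM F C a i s * G s u)) := by
        refine Finset.sum_congr rfl fun k _ => Finset.sum_congr rfl fun u _ => ?_
        rw [hPP u, rrM_mid F C hM hcyc p k u]; ring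
    _ = -(∑ k, ∑ u, G m k * rrM F C p u k * (∑ s, rrM F C a i s * G s u))
          + ∑ k, ∑ u, G m k * rrM F C u p k * (∑ s, rrM F C a i s * G s u) := by
        simp only [Finset.sum_add_distrib, Finset.sum_neg_distrib]
    _ = -(∑ t, rrM F C a i t * rrD G C p t m) + ∑ t, rrM F C a i t * rrE G C p t m := by
        rw [← rr_nfD F G C hFG hGsym a i p m, ← rr_nfE F G C hFG hGsym a i p m]

lemma rr_g3t2 (hFG : ∀ i j, ∑ k, F i k * G k j = if i = j then (1:ℝ) else 0)
    (hGsym : ∀ i j, G i j = G j i)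
    (hM : ∀ i j p, ∑ k, C i j k * F k p = -∑ k, C p j k * F k i)
    (i p a m : Fin n) :
    ∑ s, rrE G C p m s * rrM F C s i a = ∑ t, rrM F C a i t * rrE G C p t m := by
  have hPP : ∀ u, (∑ s, G u s * rrM F C s i a) = -(∑ s, rrM F C a i s * G s u) := by
    intro u
    rw [← Finset.sum_neg_distrib]
    refine Finset.sum_congr rfl fun s _ => ?_
    rw [rrM_anti F C hM s i a, hGsym u s]; ring
  rw [rr_lhsE F G C hFG hGsym p m (fun s => rrM F C s i a)]
  rw [rr_nfE F G C hFG hGsym a i p m]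
  refine Finset.sum_congr rfl fun k _ => Finset.sum_congr rfl fun u _ => ?_
  rw [hPP u, rrM_anti F C hM k p u]; ring

lemma rr_g3t3 (hFG : ∀ i j, ∑ k, F i k * G k j = if i = j then (1:ℝ) else 0)
    (hGsym : ∀ i j, G i j = G j i)
    (hM : ∀ i j p, ∑ k, C i j k * F k p = -∑ k, C p j k * F k i)
    (hcyc : ∀ i j p, ∑ k, (C i j k * F k p + C j p k * F k i + C p i k * F k j) = 0)
    (i p a m : Fin n) :
    ∑ s, rrE G C i m s * rrM F C p s a
      = -(∑ t, rrM F C p a t * rrE G C i t m) + ∑ t, rrM F C a p t * rrE G C i t m := by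
  have hRS : ∀ u, (∑ s, G u s * rrM F C p s a)
      = (∑ s, rrM F C p a s * G s u) - (∑ s, rrM F C a p s * G s u) := by
    intro u
    rw [← Finset.sum_sub_distrib]
    refine Finset.sum_congr rfl fun s _ => ?_
    rw [rrM_mid F C hM hcyc p s a, hGsym u s]; ring
  rw [rr_lhsE F G C hFG hGsym i m (fun s => rrM F C p s a)]
  calc ∑ k, ∑ u, G m k * rrM F C k i u * (∑ s, G u s * rrM F C p s a)
      = ∑ k, ∑ u, (-(G m k * rrM F C u i k * (∑ s, rrM F C p a s * G s u))
          + G m k * rrM F C u i k * (∑ s, rrM F C a p s * G s u)) := by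
        refine Finset.sum_congr rfl fun k _ => Finset.sum_congr rfl fun u _ => ?_
        rw [hRS u, rrM_anti F C hM k i u]; ring
    _ = -(∑ k, ∑ u, G m k * rrM F C u i k * (∑ s, rrM F C p a s * G s u))
          + ∑ k, ∑ u, G m k * rrM F C u i k * (∑ s, rrM F C a p s * G s u) := by
        simp only [Finset.sum_add_distrib, Finset.sum_neg_distrib]
    _ = -(∑ t, rrM F C p a t * rrE G C i t m) + ∑ t, rrM F C a p t * rrE G C i t m := by
        rw [← rr_nfE F G C hFG hGsym p a i m, ← rr_nfE F G C hFG hGsym a p i m]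

lemma rr_g3t4 (hFG : ∀ i j, ∑ k, F i k * G k j = if i = j then (1:ℝ) else 0)
    (hGsym : ∀ i j, G i j = G j i)
    (hM : ∀ i j p, ∑ k, C i j k * F k p = -∑ k, C p j k * F k i)
    (i p a m : Fin n) :
    ∑ s, rrE G C i m s * rrM F C s p a = ∑ t, rrM F C a p t * rrE G C i t m := by
  have hSS : ∀ u, (∑ s, G u s * rrM F C s p a) = -(∑ s, rrM F C a p s * G s u) := by
    intro u
    rw [← Finset.sum_neg_distrib]
    refine Finset.sum_congr rfl fun s _ => ?_
    rw [rrM_anti F C hM s p a, hGsym u s]; ring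
  rw [rr_lhsE F G C hFG hGsym i m (fun s => rrM F C s p a)]
  rw [rr_nfE F G C hFG hGsym a p i m]
  refine Finset.sum_congr rfl fun k _ => Finset.sum_congr rfl fun u _ => ?_
  rw [hSS u, rrM_anti F C hM k i u]; ring

lemma rr_K (hFG : ∀ i j, ∑ k, F i k * G k j = if i = j then (1:ℝ) else 0)
    (hGsym : ∀ i j, G i j = G j i)
    (hM : ∀ i j p, ∑ k, C i j k * F k p = -∑ k, C p j k * F k i)
    (hcyc : ∀ i j p, ∑ k, (C i j k * F k p + C j p k * F k i + C p i k * F k j) = 0)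
    (i p a m : Fin n) :
    ((∑ q, (rrM F C q i a * rrE G C p q m - rrM F C q p a * rrE G C i q m))
      - ∑ t, (rrM F C p a t * rrE G C i t m - rrM F C a p t * rrE G C i t m
              - rrM F C a i t * rrD G C p t m - rrM F C a i t * rrE G C p t m))
      + ∑ s, (rrD G C p m s * rrM F C s i a - rrE G C p m s * rrM F C s i a
              - rrE G C i m s * rrM F C p s a - rrE G C i m s * rrM F C s p a) = 0 := by
  have hg1 : ∑ q, (rrM F C q i a * rrE G C p q m - rrM F C q p a * rrE G C i q m)
      = -(∑ t, rrM F C a i t * rrE G C p t m) + ∑ t, rrM F C a p t * rrE G C i t m := by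
    rw [← Finset.sum_neg_distrib, ← Finset.sum_add_distrib]
    refine Finset.sum_congr rfl fun q _ => ?_
    rw [rrM_anti F C hM q i a, rrM_anti F C hM q p a]; ring
  have hg2 : ∑ t, (rrM F C p a t * rrE G C i t m - rrM F C a p t * rrE G C i t m
              - rrM F C a i t * rrD G C p t m - rrM F C a i t * rrE G C p t m)
      = (∑ t, rrM F C p a t * rrE G C i t m) - (∑ t, rrM F C a p t * rrE G C i t m)
        - (∑ t, rrM F C a i t * rrD G C p t m) - (∑ t, rrM F C a i t * rrE G C p t m) := by
    simp only [Finset.sum_sub_distrib]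
  have hg3 : ∑ s, (rrD G C p m s * rrM F C s i a - rrE G C p m s * rrM F C s i a
              - rrE G C i m s * rrM F C p s a - rrE G C i m s * rrM F C s p a)
      = (∑ s, rrD G C p m s * rrM F C s i a) - (∑ s, rrE G C p m s * rrM F C s i a)
        - (∑ s, rrE G C i m s * rrM F C p s a) - (∑ s, rrE G C i m s * rrM F C s p a) := by
    simp only [Finset.sum_sub_distrib]
  rw [hg1, hg2, hg3, rr_g3t1 F G C hFG hGsym hM hcyc i p a m,
    rr_g3t2 F G C hFG hGsym hM i p a m, rr_g3t3 F G C hFG hGsym hM hcyc i p a m,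
    rr_g3t4 F G C hFG hGsym hM i p a m]
  ring

lemma rr_pair (X Y : Fin n → ℝ) (Z : Fin n → Fin n → ℝ) :
    ∑ s, X s * (∑ a, Z s a * Y a) = ∑ a, (∑ s, X s * Z s a) * Y a := by
  simp only [Finset.mul_sum]
  rw [Finset.sum_comm]
  refine Finset.sum_congr rfl fun a _ => ?_
  rw [Finset.sum_mul]
  exact Finset.sum_congr rfl fun s _ => by ring

lemma rr_pair2 (X Y : Fin n → ℝ) (Z : Fin n → Fin n → ℝ) :
    ∑ k, X k * (∑ q, Y q * Z q k) = ∑ q, Y q * (∑ k, Z q k * X k) := by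
  simp only [Finset.mul_sum]
  rw [Finset.sum_comm]
  exact Finset.sum_congr rfl fun q _ => Finset.sum_congr rfl fun k _ => by ring

lemma rr_pair3 (B : Fin n → ℝ) (z m : Fin n) :
    ∑ k, (∑ q, B q * G q k) * C k z m = ∑ q, B q * rrE G C z q m := by
  simp only [Finset.sum_mul, rrE, Finset.mul_sum]
  rw [Finset.sum_comm]
  refine Finset.sum_congr rfl fun q _ => Finset.sum_congr rfl fun k _ => by ring

lemma rr_pair4 (X B : Fin n → ℝ) (Y : Fin n → Fin n → ℝ) :
    ∑ k, X k * (∑ q, Y q k * B q) = ∑ q, (∑ k, X k * Y q k) * B q := by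
  simp only [Finset.mul_sum, Finset.sum_mul]
  rw [Finset.sum_comm]
  refine Finset.sum_congr rfl fun q _ => Finset.sum_congr rfl fun k _ => by ring

-- C s z m = ∑ t, F s t * rrE G C z t m  (raise first index)
lemma rr_recE (hFG : ∀ i j, ∑ k, F i k * G k j = if i = j then (1:ℝ) else 0)
    (z s m : Fin n) : C s z m = ∑ t, F s t * rrE G C z t m := by
  have h1 : ∑ t, F s t * rrE G C z t m = ∑ k, (∑ t, F s t * G t k) * C k z m := by
    simp only [rrE, Finset.mul_sum, Finset.sum_mul, mul_assoc]
    exact Finset.sum_comm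
  rw [h1]
  simp only [hFG, ite_mul, one_mul, zero_mul]
  rw [Finset.sum_ite_eq Finset.univ s (fun k => C k z m)]
  simp

-- C z s m = ∑ t, F s t * rrD G C z t m   (raise middle index)
lemma rr_recD (hFG : ∀ i j, ∑ k, F i k * G k j = if i = j then (1:ℝ) else 0)
    (z s m : Fin n) : C z s m = ∑ t, F s t * rrD G C z t m := by
  have h1 : ∑ t, F s t * rrD G C z t m = ∑ k, (∑ t, F s t * G t k) * C z k m := by
    simp only [rrD, Finset.mul_sum, Finset.sum_mul, mul_assoc]
    exact Finset.sum_comm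
  rw [h1]
  simp only [hFG, ite_mul, one_mul, zero_mul]
  rw [Finset.sum_ite_eq Finset.univ s (fun k => C z k m)]
  simp

lemma rr_con1 (hFG : ∀ i j, ∑ k, F i k * G k j = if i = j then (1:ℝ) else 0)
    (x y z m : Fin n) : ∑ s, C x y s * C s z m = ∑ t, rrM F C x y t * rrE G C z t m := by
  calc ∑ s, C x y s * C s z m
      = ∑ s, C x y s * (∑ t, F s t * rrE G C z t m) :=
        Finset.sum_congr rfl fun s _ => by rw [← rr_recE F G C hFG z s m]
    _ = ∑ t, (∑ s, C x y s * F s t) * rrE G C z t m := rr_pair _ _ _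
    _ = ∑ t, rrM F C x y t * rrE G C z t m := rfl

lemma rr_con2 (hFG : ∀ i j, ∑ k, F i k * G k j = if i = j then (1:ℝ) else 0)
    (x y z m : Fin n) : ∑ s, C x y s * C z s m = ∑ t, rrM F C x y t * rrD G C z t m := by
  calc ∑ s, C x y s * C z s m
      = ∑ s, C x y s * (∑ t, F s t * rrD G C z t m) :=
        Finset.sum_congr rfl fun s _ => by rw [← rr_recD F G C hFG z s m]
    _ = ∑ t, (∑ s, C x y s * F s t) * rrD G C z t m := rr_pair _ _ _
    _ = ∑ t, rrM F C x y t * rrD G C z t m := rfl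

lemma rr_T4exp (hFG : ∀ i j, ∑ k, F i k * G k j = if i = j then (1:ℝ) else 0)
    (p i a m : Fin n) :
    (∑ s, (C p a s * C s i m - C a p s * C s i m - C a i s * C p s m - C a i s * C s p m))
      = ∑ t, (rrM F C p a t * rrE G C i t m - rrM F C a p t * rrE G C i t m
              - rrM F C a i t * rrD G C p t m - rrM F C a i t * rrE G C p t m) := by
  simp only [Finset.sum_sub_distrib]
  rw [rr_con1 F G C hFG p a i m, rr_con1 F G C hFG a p i m, rr_con2 F G C hFG a i p m,
    rr_con1 F G C hFG a i p m]

section withGa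
variable (Ga : Fin n → Fin n → Fin n → ℝ)

lemma rr_recGa (hFG : ∀ i j, ∑ k, F i k * G k j = if i = j then (1:ℝ) else 0)
    (s j l : Fin n) : Ga s j l = ∑ t, F s t * rrGam G Ga t j l := by
  have h1 : ∑ t, F s t * rrGam G Ga t j l = ∑ k, (∑ t, F s t * G t k) * Ga k j l := by
    simp only [rrGam, Finset.mul_sum, Finset.sum_mul, mul_assoc]
    exact Finset.sum_comm
  rw [h1]
  simp only [hFG, ite_mul, one_mul, zero_mul]
  rw [Finset.sum_ite_eq Finset.univ s (fun k => Ga k j l)]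
  simp

lemma rr_CGa (hFG : ∀ i j, ∑ k, F i k * G k j = if i = j then (1:ℝ) else 0)
    (x y j l : Fin n) :
    ∑ k, C x y k * Ga k j l = ∑ t, rrM F C x y t * rrGam G Ga t j l := by
  calc ∑ k, C x y k * Ga k j l
      = ∑ k, C x y k * (∑ t, F k t * rrGam G Ga t j l) :=
        Finset.sum_congr rfl fun k _ => by rw [← rr_recGa F G Ga hFG k j l]
    _ = ∑ t, (∑ k, C x y k * F k t) * rrGam G Ga t j l := rr_pair _ _ _
    _ = ∑ t, rrM F C x y t * rrGam G Ga t j l := rfl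

lemma rr_R6 (hFG : ∀ i j, ∑ k, F i k * G k j = if i = j then (1:ℝ) else 0)
    (x j l q : Fin n) :
    (∑ s, (Ga q j s * C s x l - Ga s j l * C q x s))
      = ∑ a, rrM F Ga q j a * rrE G C x a l - ∑ a, rrM F C q x a * rrGam G Ga a j l := by
  rw [Finset.sum_sub_distrib]
  congr 1
  · calc ∑ s, Ga q j s * C s x l
        = ∑ s, Ga q j s * (∑ a, F s a * rrE G C x a l) :=
          Finset.sum_congr rfl fun s _ => by rw [← rr_recE F G C hFG x s l]
      _ = ∑ a, (∑ s, Ga q j s * F s a) * rrE G C x a l := rr_pair _ _ _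
      _ = ∑ a, rrM F Ga q j a * rrE G C x a l := rfl
  · calc ∑ s, Ga s j l * C q x s
        = ∑ s, C q x s * (∑ a, F s a * rrGam G Ga a j l) :=
          Finset.sum_congr rfl fun s _ => by rw [← rr_recGa F G Ga hFG s j l]; ring
      _ = ∑ a, (∑ s, C q x s * F s a) * rrGam G Ga a j l := rr_pair _ _ _
      _ = ∑ a, rrM F C q x a * rrGam G Ga a j l := rfl

end withGa

lemma rr_pair5 (Y B : Fin n → ℝ) (Z : Fin n → Fin n → ℝ) :
    ∑ q, (∑ t, Y t * Z q t) * B q = ∑ t, Y t * (∑ q, Z q t * B q) := by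
  simp only [Finset.sum_mul, Finset.mul_sum]
  rw [Finset.sum_comm]
  exact Finset.sum_congr rfl fun t _ => Finset.sum_congr rfl fun q _ => by ring

section withGaW
variable (Ga : Fin n → Fin n → Fin n → ℝ)
variable (W pdC pdGa : Fin n → Fin n → Fin n → Fin n → ℝ)

lemma rr_TL1 (hFG : ∀ i j, ∑ k, F i k * G k j = if i = j then (1:ℝ) else 0)
    (hpdGa : ∀ i j l q, pdGa i j l q
      = ∑ p, (∑ s, (Ga p j s * C s i l - Ga s j l * C p i s)) * G p q - W i j q l)
    (x z j l m : Fin n) :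
    ∑ k, pdGa x j l k * C k z m
      = ∑ q, (∑ a, rrM F Ga q j a * rrE G C x a l) * rrE G C z q m
        - ∑ q, (∑ a, rrM F C q x a * rrGam G Ga a j l) * rrE G C z q m
        - ∑ k, W x j k l * C k z m := by
  calc ∑ k, pdGa x j l k * C k z m
      = ∑ k, ((∑ q, (∑ s, (Ga q j s * C s x l - Ga s j l * C q x s)) * G q k) * C k z m
          - W x j k l * C k z m) := by
        refine Finset.sum_congr rfl fun k _ => ?_
        rw [hpdGa x j l k]; ring
    _ = ∑ k, (∑ q, (∑ s, (Ga q j s * C s x l - Ga s j l * C q x s)) * G q k) * C k z m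
          - ∑ k, W x j k l * C k z m := Finset.sum_sub_distrib _ _
    _ = ∑ q, (∑ s, (Ga q j s * C s x l - Ga s j l * C q x s)) * rrE G C z q m
          - ∑ k, W x j k l * C k z m := by
        rw [rr_pair3 G C _ z m]
    _ = ∑ q, (∑ a, rrM F Ga q j a * rrE G C x a l) * rrE G C z q m
        - ∑ q, (∑ a, rrM F C q x a * rrGam G Ga a j l) * rrE G C z q m
        - ∑ k, W x j k l * C k z m := by
        congr 1
        rw [← Finset.sum_sub_distrib]
        refine Finset.sum_congr rfl fun q _ => ?_
        rw [rr_R6 F G C Ga hFG x j l q]; ring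

lemma rr_TL3 (hFG : ∀ i j, ∑ k, F i k * G k j = if i = j then (1:ℝ) else 0)
    (hpdC : ∀ i j l q, pdC i j l q
      = ∑ p, (∑ s, (C i p s * C s j l - C p i s * C s j l - C p j s * C i s l - C p j s * C s i l)) * G p q)
    (i j p l m : Fin n) :
    ∑ k, Ga k j l * pdC p i m k
      = ∑ a, rrGam G Ga a j l *
          (∑ t, (rrM F C p a t * rrE G C i t m - rrM F C a p t * rrE G C i t m
                 - rrM F C a i t * rrD G C p t m - rrM F C a i t * rrE G C p t m)) := by
  calc ∑ k, Ga k j l * pdC p i m k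
      = ∑ k, Ga k j l * (∑ q, (∑ s, (C p q s * C s i m - C q p s * C s i m
            - C q i s * C p s m - C q i s * C s p m)) * G q k) := by
        refine Finset.sum_congr rfl fun k _ => ?_
        rw [hpdC p i m k]
    _ = ∑ q, (∑ s, (C p q s * C s i m - C q p s * C s i m
            - C q i s * C p s m - C q i s * C s p m)) * (∑ k, G q k * Ga k j l) :=
        rr_pair2 _ _ _
    _ = ∑ a, rrGam G Ga a j l *
          (∑ t, (rrM F C p a t * rrE G C i t m - rrM F C a p t * rrE G C i t m
                 - rrM F C a i t * rrD G C p t m - rrM F C a i t * rrE G C p t m)) := by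
        refine Finset.sum_congr rfl fun a _ => ?_
        rw [← rr_T4exp F G C hFG p i a m, rrGam]; ring

lemma rr_TL4 (hFG : ∀ i j, ∑ k, F i k * G k j = if i = j then (1:ℝ) else 0)
    (hGsym : ∀ i j, G i j = G j i)
    (hpdC : ∀ i j l q, pdC i j l q
      = ∑ p, (∑ s, (C i p s * C s j l - C p i s * C s j l - C p j s * C i s l - C p j s * C s i l)) * G p q)
    (i j p l m : Fin n) :
    ∑ k, Ga k j l * pdC p i k m
      = ∑ a, rrGam G Ga a j l *
          (∑ s, (rrD G C p m s * rrM F C s i a - rrE G C p m s * rrM F C s i a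
                 - rrE G C i m s * rrM F C p s a - rrE G C i m s * rrM F C s p a)) := by
  have hDq : ∀ s, ∑ q, C p q s * G q m = rrD G C p m s := by
    intro s
    rw [rrD]
    refine Finset.sum_congr rfl fun q _ => ?_
    rw [hGsym m q]; ring
  have hEp : ∀ s, ∑ q, C q p s * G q m = rrE G C p m s := by
    intro s
    rw [rrE]
    refine Finset.sum_congr rfl fun q _ => ?_
    rw [hGsym m q]; ring
  have hEi : ∀ s, ∑ q, C q i s * G q m = rrE G C i m s := by
    intro s
    rw [rrE]
    refine Finset.sum_congr rfl fun q _ => ?_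
    rw [hGsym m q]; ring
  have hInner : ∀ q, ∑ k, Ga k j l * (∑ s, (C p q s * C s i k - C q p s * C s i k
        - C q i s * C p s k - C q i s * C s p k))
      = ∑ t, rrGam G Ga t j l * (∑ s, (C p q s * rrM F C s i t - C q p s * rrM F C s i t
          - C q i s * rrM F C p s t - C q i s * rrM F C s p t)) := by
    intro q
    calc ∑ k, Ga k j l * (∑ s, (C p q s * C s i k - C q p s * C s i k
          - C q i s * C p s k - C q i s * C s p k))
        = ∑ s, (C p q s * (∑ k, C s i k * Ga k j l) - C q p s * (∑ k, C s i k * Ga k j l)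
            - C q i s * (∑ k, C p s k * Ga k j l) - C q i s * (∑ k, C s p k * Ga k j l)) := by
          conv_lhs => simp only [Finset.mul_sum]
          rw [Finset.sum_comm]
          refine Finset.sum_congr rfl fun s _ => ?_
          rw [Finset.mul_sum, Finset.mul_sum, Finset.mul_sum, Finset.mul_sum,
            ← Finset.sum_sub_distrib, ← Finset.sum_sub_distrib, ← Finset.sum_sub_distrib]
          exact Finset.sum_congr rfl fun k _ => by ring
      _ = ∑ s, (C p q s * (∑ t, rrM F C s i t * rrGam G Ga t j l)
            - C q p s * (∑ t, rrM F C s i t * rrGam G Ga t j l)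
            - C q i s * (∑ t, rrM F C p s t * rrGam G Ga t j l)
            - C q i s * (∑ t, rrM F C s p t * rrGam G Ga t j l)) := by
          refine Finset.sum_congr rfl fun s _ => ?_
          rw [rr_CGa F G C Ga hFG s i j l, rr_CGa F G C Ga hFG p s j l,
            rr_CGa F G C Ga hFG s p j l]
      _ = ∑ t, rrGam G Ga t j l * (∑ s, (C p q s * rrM F C s i t - C q p s * rrM F C s i t
            - C q i s * rrM F C p s t - C q i s * rrM F C s p t)) := by
          simp only [Finset.mul_sum, ← Finset.sum_sub_distrib]
          rw [Finset.sum_comm]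
          exact Finset.sum_congr rfl fun t _ => Finset.sum_congr rfl fun s _ => by ring
  have hJ : ∀ t, ∑ q, (∑ s, (C p q s * rrM F C s i t - C q p s * rrM F C s i t
        - C q i s * rrM F C p s t - C q i s * rrM F C s p t)) * G q m
      = ∑ s, (rrD G C p m s * rrM F C s i t - rrE G C p m s * rrM F C s i t
          - rrE G C i m s * rrM F C p s t - rrE G C i m s * rrM F C s p t) := by
    intro t
    calc ∑ q, (∑ s, (C p q s * rrM F C s i t - C q p s * rrM F C s i t
          - C q i s * rrM F C p s t - C q i s * rrM F C s p t)) * G q m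
        = ∑ s, ((∑ q, C p q s * G q m) * rrM F C s i t - (∑ q, C q p s * G q m) * rrM F C s i t
            - (∑ q, C q i s * G q m) * rrM F C p s t - (∑ q, C q i s * G q m) * rrM F C s p t) := by
          conv_lhs => simp only [Finset.sum_mul]
          rw [Finset.sum_comm]
          refine Finset.sum_congr rfl fun s _ => ?_
          rw [Finset.sum_mul, Finset.sum_mul, Finset.sum_mul, Finset.sum_mul,
            ← Finset.sum_sub_distrib, ← Finset.sum_sub_distrib, ← Finset.sum_sub_distrib]
          exact Finset.sum_congr rfl fun q _ => by ring
      _ = ∑ s, (rrD G C p m s * rrM F C s i t - rrE G C p m s * rrM F C s i t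
            - rrE G C i m s * rrM F C p s t - rrE G C i m s * rrM F C s p t) := by
          refine Finset.sum_congr rfl fun s _ => ?_
          rw [hDq s, hEp s, hEi s]
  calc ∑ k, Ga k j l * pdC p i k m
      = ∑ k, Ga k j l * (∑ q, (∑ s, (C p q s * C s i k - C q p s * C s i k
            - C q i s * C p s k - C q i s * C s p k)) * G q m) := by
        refine Finset.sum_congr rfl fun k _ => ?_
        rw [hpdC p i k m]
    _ = ∑ q, (∑ k, Ga k j l * (∑ s, (C p q s * C s i k - C q p s * C s i k
            - C q i s * C p s k - C q i s * C s p k))) * G q m :=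
        rr_pair4 _ _ _
    _ = ∑ q, (∑ t, rrGam G Ga t j l * (∑ s, (C p q s * rrM F C s i t - C q p s * rrM F C s i t
            - C q i s * rrM F C p s t - C q i s * rrM F C s p t))) * G q m := by
        refine Finset.sum_congr rfl fun q _ => ?_
        rw [hInner q]
    _ = ∑ t, rrGam G Ga t j l * (∑ q, (∑ s, (C p q s * rrM F C s i t - C q p s * rrM F C s i t
            - C q i s * rrM F C p s t - C q i s * rrM F C s p t)) * G q m) :=
        rr_pair5 _ _ _
    _ = ∑ a, rrGam G Ga a j l *
          (∑ s, (rrD G C p m s * rrM F C s i a - rrE G C p m s * rrM F C s i a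
                 - rrE G C i m s * rrM F C p s a - rrE G C i m s * rrM F C s p a)) := by
        refine Finset.sum_congr rfl fun a _ => ?_
        rw [hJ a]

end withGaW

lemma rr_pair6 (Y B : Fin n → ℝ) (Z : Fin n → Fin n → ℝ) :
    ∑ q, (∑ a, Z q a * Y a) * B q = ∑ a, Y a * (∑ q, Z q a * B q) := by
  simp only [Finset.sum_mul, Finset.mul_sum]
  rw [Finset.sum_comm]
  exact Finset.sum_congr rfl fun t _ => Finset.sum_congr rfl fun q _ => by ring

section bracket
variable (Ga : Fin n → Fin n → Fin n → ℝ)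
variable (W pdC pdGa : Fin n → Fin n → Fin n → Fin n → ℝ)

lemma rr_bracket (hFG : ∀ i j, ∑ k, F i k * G k j = if i = j then (1:ℝ) else 0)
    (hGsym : ∀ i j, G i j = G j i)
    (hpdC : ∀ i j l q, pdC i j l q
      = ∑ p, (∑ s, (C i p s * C s j l - C p i s * C s j l - C p j s * C i s l - C p j s * C s i l)) * G p q)
    (hpdGa : ∀ i j l q, pdGa i j l q
      = ∑ p, (∑ s, (Ga p j s * C s i l - Ga s j l * C p i s)) * G p q - W i j q l)
    (i j p l m : Fin n) :
    (∑ k, (- pdGa i j l k * C k p m + pdGa p j l k * C k i m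
            - Ga k j l * pdC p i m k + Ga k j l * pdC p i k m))
      + ∑ k, (C k i l * W p j k m - C k p l * W i j k m)
    = (-(∑ q, (∑ a, rrM F Ga q j a * rrE G C i a l) * rrE G C p q m)
        + ∑ q, (∑ a, rrM F Ga q j a * rrE G C p a l) * rrE G C i q m)
      + ((∑ k, W i j k l * C k p m) - (∑ k, W p j k l * C k i m)
          + (∑ k, C k i l * W p j k m) - (∑ k, C k p l * W i j k m))
      + ∑ a, rrGam G Ga a j l *
          (((∑ q, (rrM F C q i a * rrE G C p q m - rrM F C q p a * rrE G C i q m))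
            - ∑ t, (rrM F C p a t * rrE G C i t m - rrM F C a p t * rrE G C i t m
                    - rrM F C a i t * rrD G C p t m - rrM F C a i t * rrE G C p t m))
            + ∑ s, (rrD G C p m s * rrM F C s i a - rrE G C p m s * rrM F C s i a
                    - rrE G C i m s * rrM F C p s a - rrE G C i m s * rrM F C s p a)) := by
  have hsplit : ∑ k, (- pdGa i j l k * C k p m + pdGa p j l k * C k i m
            - Ga k j l * pdC p i m k + Ga k j l * pdC p i k m)
      = -(∑ k, pdGa i j l k * C k p m) + ∑ k, pdGa p j l k * C k i m
        - ∑ k, Ga k j l * pdC p i m k + ∑ k, Ga k j l * pdC p i k m := by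
    simp only [neg_mul, Finset.sum_add_distrib, Finset.sum_sub_distrib,
      Finset.sum_neg_distrib]
  have hWS0 : ∑ k, (C k i l * W p j k m - C k p l * W i j k m)
      = (∑ k, C k i l * W p j k m) - ∑ k, C k p l * W i j k m :=
    Finset.sum_sub_distrib _ _
  have hT1 := rr_TL1 F G C Ga W pdGa hFG hpdGa i p j l m
  have hT2 := rr_TL1 F G C Ga W pdGa hFG hpdGa p i j l m
  have hT3 := rr_TL3 F G C Ga pdC hFG hpdC i j p l m
  have hT4 := rr_TL4 F G C Ga pdC hFG hGsym hpdC i j p l m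
  have hP1 : ∑ q, (∑ a, rrM F C q i a * rrGam G Ga a j l) * rrE G C p q m
      = ∑ a, rrGam G Ga a j l * (∑ q, rrM F C q i a * rrE G C p q m) :=
    rr_pair6 _ _ _
  have hP2 : ∑ q, (∑ a, rrM F C q p a * rrGam G Ga a j l) * rrE G C i q m
      = ∑ a, rrGam G Ga a j l * (∑ q, rrM F C q p a * rrE G C i q m) :=
    rr_pair6 _ _ _
  have hγ : ∑ a, rrGam G Ga a j l * (∑ q, rrM F C q i a * rrE G C p q m)
      - ∑ a, rrGam G Ga a j l * (∑ q, rrM F C q p a * rrE G C i q m)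
      - ∑ a, rrGam G Ga a j l *
          (∑ t, (rrM F C p a t * rrE G C i t m - rrM F C a p t * rrE G C i t m
                 - rrM F C a i t * rrD G C p t m - rrM F C a i t * rrE G C p t m))
      + ∑ a, rrGam G Ga a j l *
          (∑ s, (rrD G C p m s * rrM F C s i a - rrE G C p m s * rrM F C s i a
                 - rrE G C i m s * rrM F C p s a - rrE G C i m s * rrM F C s p a))
      = ∑ a, rrGam G Ga a j l *
          (((∑ q, (rrM F C q i a * rrE G C p q m - rrM F C q p a * rrE G C i q m))
            - ∑ t, (rrM F C p a t * rrE G C i t m - rrM F C a p t * rrE G C i t m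
                    - rrM F C a i t * rrD G C p t m - rrM F C a i t * rrE G C p t m))
            + ∑ s, (rrD G C p m s * rrM F C s i a - rrE G C p m s * rrM F C s i a
                    - rrE G C i m s * rrM F C p s a - rrE G C i m s * rrM F C s p a)) := by
    rw [← Finset.sum_sub_distrib, ← Finset.sum_sub_distrib, ← Finset.sum_add_distrib]
    refine Finset.sum_congr rfl fun a _ => ?_
    rw [show (∑ q, (rrM F C q i a * rrE G C p q m - rrM F C q p a * rrE G C i q m))
        = (∑ q, rrM F C q i a * rrE G C p q m) - ∑ q, rrM F C q p a * rrE G C i q m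
      from Finset.sum_sub_distrib _ _]
    ring
  rw [hsplit, hWS0, hT1, hT2, hT3, hT4, hP1, hP2, ← hγ]
  ring

end bracket

section core
variable (Ga : Fin n → Fin n → Fin n → ℝ)
variable (W pdC pdGa : Fin n → Fin n → Fin n → Fin n → ℝ)

lemma rr_core (hFG : ∀ i j, ∑ k, F i k * G k j = if i = j then (1:ℝ) else 0)
    (hGsym : ∀ i j, G i j = G j i)
    (hM : ∀ i j p, ∑ k, C i j k * F k p = -∑ k, C p j k * F k i)
    (hcyc : ∀ i j p, ∑ k, (C i j k * F k p + C j p k * F k i + C p i k * F k j) = 0)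
    (hN : ∀ i j p, ∑ k, Ga i j k * F k p = ∑ k, Ga p j k * F k i)
    (hpdC : ∀ i j l q, pdC i j l q
      = ∑ p, (∑ s, (C i p s * C s j l - C p i s * C s j l - C p j s * C i s l - C p j s * C s i l)) * G p q)
    (hpdGa : ∀ i j l q, pdGa i j l q
      = ∑ p, (∑ s, (Ga p j s * C s i l - Ga s j l * C p i s)) * G p q - W i j q l)
    (i j p l m : Fin n) :
    ((∑ k, (- pdGa i j l k * C k p m + pdGa p j l k * C k i m
            - Ga k j l * pdC p i m k + Ga k j l * pdC p i k m))
      + ∑ k, (C k i l * W p j k m - C k p l * W i j k m))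
    + ((∑ k, (- pdGa i j m k * C k p l + pdGa p j m k * C k i l
            - Ga k j m * pdC p i l k + Ga k j m * pdC p i k l))
      + ∑ k, (C k i m * W p j k l - C k p m * W i j k l)) = 0 := by
  have hK : ∀ (a m' : Fin n),
      (((∑ q, (rrM F C q i a * rrE G C p q m' - rrM F C q p a * rrE G C i q m'))
        - ∑ t, (rrM F C p a t * rrE G C i t m' - rrM F C a p t * rrE G C i t m'
                - rrM F C a i t * rrD G C p t m' - rrM F C a i t * rrE G C p t m'))
        + ∑ s, (rrD G C p m' s * rrM F C s i a - rrE G C p m' s * rrM F C s i a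
                - rrE G C i m' s * rrM F C p s a - rrE G C i m' s * rrM F C s p a)) = 0 :=
    fun a m' => rr_K F G C hFG hGsym hM hcyc i p a m'
  have hS : ∀ l' m' : Fin n,
      ∑ q, (∑ a, rrM F Ga q j a * rrE G C i a l') * rrE G C p q m'
        = ∑ q, (∑ a, rrM F Ga q j a * rrE G C p a m') * rrE G C i q l' := by
    intro l' m'
    calc ∑ q, (∑ a, rrM F Ga q j a * rrE G C i a l') * rrE G C p q m'
        = ∑ q, ∑ a, rrM F Ga q j a * rrE G C i a l' * rrE G C p q m' := by
          exact Finset.sum_congr rfl fun q _ => Finset.sum_mul _ _ _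
      _ = ∑ a, ∑ q, rrM F Ga q j a * rrE G C i a l' * rrE G C p q m' := Finset.sum_comm
      _ = ∑ q, ∑ a, rrM F Ga q j a * rrE G C p a m' * rrE G C i q l' := by
          refine Finset.sum_congr rfl fun q _ => Finset.sum_congr rfl fun a _ => ?_
          rw [show rrM F Ga a j q = rrM F Ga q j a from hN a j q]
          ring
      _ = ∑ q, (∑ a, rrM F Ga q j a * rrE G C p a m') * rrE G C i q l' := by
          exact Finset.sum_congr rfl fun q _ => (Finset.sum_mul _ _ _).symm
  have hb1 := rr_bracket F G C Ga W pdC pdGa hFG hGsym hpdC hpdGa i j p l m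
  have hb2 := rr_bracket F G C Ga W pdC pdGa hFG hGsym hpdC hpdGa i j p m l
  rw [hb1, hb2]
  simp only [hK, mul_zero, Finset.sum_const_zero, add_zero]
  have hw1 : ∑ k, W i j k l * C k p m = ∑ k, C k p m * W i j k l :=
    Finset.sum_congr rfl fun k _ => by ring
  have hw2 : ∑ k, W p j k l * C k i m = ∑ k, C k i m * W p j k l :=
    Finset.sum_congr rfl fun k _ => by ring
  have hw3 : ∑ k, W i j k m * C k p l = ∑ k, C k p l * W i j k m :=
    Finset.sum_congr rfl fun k _ => by ring
  have hw4 : ∑ k, W p j k m * C k i l = ∑ k, C k i l * W p j k m :=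
    Finset.sum_congr rfl fun k _ => by ring
  have hs1 := hS l m
  have hs2 := hS m l
  linarith

end core

end rrlemmas



/-- Lemma A.2, lem:RR: under the Doyle–Potëmin Hamiltonian conditions
and the compatibility conditions for `Γ`, the quantity `R^{ijp}_{lm}` satisfies
`R^{ijp}_{lm} + R^{ijp}_{ml} = 0`. -/
theorem lemma_RR
    (n : ℕ) (hn : 1 ≤ n)
    (ι : Type) [Fintype ι]
    (U : Set (Fin n → ℝ)) (hU : IsOpen U)
    (f finv : Fin n → Fin n → (Fin n → ℝ) → ℝ)
    (c : Fin n → Fin n → Fin n → (Fin n → ℝ) → ℝ)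
    (Γ : Fin n → Fin n → Fin n → (Fin n → ℝ) → ℝ)
    (cmat : ι → ι → ℝ) (hcmat : ∀ α β, cmat α β = cmat β α)
    (w : ι → Fin n → Fin n → (Fin n → ℝ) → ℝ)
    (hfs : ∀ i j, ContDiffOn ℝ (⊤ : ℕ∞) (f i j) U)
    (hcs : ∀ i j k, ContDiffOn ℝ (⊤ : ℕ∞) (c i j k) U)
    (hΓs : ∀ i j k, ContDiffOn ℝ (⊤ : ℕ∞) (Γ i j k) U)
    (hws : ∀ α i k, ContDiffOn ℝ (⊤ : ℕ∞) (w α i k) U)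
    -- (f^{ij}) invertible with symmetric inverse (f_{ij})
    (hinv : ∀ i j, ∀ u ∈ U, ∑ k, f i k u * finv k j u = if i = j then (1:ℝ) else 0)
    (hinv' : ∀ i j, ∀ u ∈ U, ∑ k, finv i k u * f k j u = if i = j then (1:ℝ) else 0)
    (hfinvsym : ∀ i j, ∀ u ∈ U, finv i j u = finv j i u)
    -- Doyle–Potëmin conditions
    (h1 : ∀ i j k, ∀ u ∈ U, pd (f i j) k u = c i j k u + c j i k u)
    (h2 : ∀ i j p, ∀ u ∈ U, ∑ k, c i j k u * f k p u = -∑ k, c p j k u * f k i u)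
    (h3 : ∀ i j p, ∀ u ∈ U,
      ∑ k, (c i j k u * f k p u + c j p k u * f k i u + c p i k u * f k j u) = 0)
    (h4 : ∀ i j l p, ∀ u ∈ U,
      ∑ k, pd (c i j k) l u * f k p u
        = ∑ k, (c i p k u * c k j l u - c p i k u * c k j l u
                - c p j k u * c i k l u - c p j k u * c k i l u))
    -- Γ f symmetry
    (h5 : ∀ i j p, ∀ u ∈ U, ∑ k, Γ i j k u * f k p u = ∑ k, Γ p j k u * f k i u)
    -- Gamma-derivative condition
    (h6 : ∀ i j l p, ∀ u ∈ U,
      ∑ k, (pd (Γ i j k) l u + ∑ α, ∑ β, cmat α β * w α i k u * w β j l u) * f k p u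
        = ∑ k, (Γ p j k u * c k i l u - Γ k j l u * c p i k u)) :
    -- R^{ijp}_{lm} + R^{ijp}_{ml} = 0
    ∀ i j p l m, ∀ u ∈ U,
      ((∑ k, (- pd (Γ i j k) l u * c k p m u + pd (Γ p j k) l u * c k i m u
              - Γ k j l u * pd (c p i k) m u + Γ k j l u * pd (c p i m) k u))
        + ∑ α, ∑ β, cmat α β *
            ∑ k, (c k i l u * w α p k u * w β j m u - c k p l u * w α i k u * w β j m u))
      +
      ((∑ k, (- pd (Γ i j k) m u * c k p l u + pd (Γ p j k) m u * c k i l u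
              - Γ k j m u * pd (c p i k) l u + Γ k j m u * pd (c p i l) k u))
        + ∑ α, ∑ β, cmat α β *
            ∑ k, (c k i m u * w α p k u * w β j l u - c k p m u * w α i k u * w β j l u))
      = 0 := by
  intro i j p l m u hu
  set F : Fin n → Fin n → ℝ := fun a b => f a b u with hF
  set G : Fin n → Fin n → ℝ := fun a b => finv a b u with hG
  set C : Fin n → Fin n → Fin n → ℝ := fun a b k => c a b k u with hC
  set Ga : Fin n → Fin n → Fin n → ℝ := fun a b k => Γ a b k u with hGa
  set Wf : Fin n → Fin n → Fin n → Fin n → ℝ :=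
    fun x y k l' => ∑ α, ∑ β, cmat α β * w α x k u * w β y l' u with hWf
  have hFG : ∀ a b, ∑ k, F a k * G k b = if a = b then (1:ℝ) else 0 :=
    fun a b => hinv a b u hu
  have hGsym : ∀ a b, G a b = G b a := fun a b => hfinvsym a b u hu
  have hM : ∀ a b d, ∑ k, C a b k * F k d = -∑ k, C d b k * F k a :=
    fun a b d => h2 a b d u hu
  have hcyc : ∀ a b d, ∑ k, (C a b k * F k d + C b d k * F k a + C d a k * F k b) = 0 :=
    fun a b d => h3 a b d u hu
  have hN : ∀ a b d, ∑ k, Ga a b k * F k d = ∑ k, Ga d b k * F k a :=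
    fun a b d => h5 a b d u hu
  have hpdC : ∀ x y l' q, pd (c x y q) l' u
      = ∑ d, (∑ s, (C x d s * C s y l' - C d x s * C s y l'
          - C d y s * C x s l' - C d y s * C s x l')) * G d q := by
    intro x y l' q
    have e := rr_extract' F G hFG (fun k => pd (c x y k) l' u) q
    rw [e]
    refine Finset.sum_congr rfl fun d _ => ?_
    rw [h4 x y l' d u hu]
  have hpdGa : ∀ x y l' q, pd (Γ x y q) l' u
      = ∑ d, (∑ s, (Ga d y s * C s x l' - Ga s y l' * C d x s)) * G d q - Wf x y q l' := by
    intro x y l' q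
    have e := rr_extract' F G hFG
      (fun k => pd (Γ x y k) l' u + ∑ α, ∑ β, cmat α β * w α x k u * w β y l' u) q
    have e2 : ∑ d, (∑ k, (pd (Γ x y k) l' u
          + ∑ α, ∑ β, cmat α β * w α x k u * w β y l' u) * F k d) * G d q
        = ∑ d, (∑ s, (Ga d y s * C s x l' - Ga s y l' * C d x s)) * G d q :=
      Finset.sum_congr rfl fun d _ => by rw [h6 x y l' d u hu]
    rw [← e2]
    linarith [e]
  have hWc : ∀ l' m', ∑ α, ∑ β, cmat α β *
        ∑ k, (c k i l' u * w α p k u * w β j m' u - c k p l' u * w α i k u * w β j m' u)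
      = ∑ k, (C k i l' * Wf p j k m' - C k p l' * Wf i j k m') := by
    intro l' m'
    calc ∑ α, ∑ β, cmat α β *
        ∑ k, (c k i l' u * w α p k u * w β j m' u - c k p l' u * w α i k u * w β j m' u)
        = ∑ α, ∑ β, ∑ k, (c k i l' u * (cmat α β * w α p k u * w β j m' u)
            - c k p l' u * (cmat α β * w α i k u * w β j m' u)) := by
          refine Finset.sum_congr rfl fun α _ => Finset.sum_congr rfl fun β _ => ?_
          rw [Finset.mul_sum]
          exact Finset.sum_congr rfl fun k _ => by ring
      _ = ∑ α, ∑ k, ∑ β, (c k i l' u * (cmat α β * w α p k u * w β j m' u)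
            - c k p l' u * (cmat α β * w α i k u * w β j m' u)) :=
          Finset.sum_congr rfl fun α _ => Finset.sum_comm
      _ = ∑ k, ∑ α, ∑ β, (c k i l' u * (cmat α β * w α p k u * w β j m' u)
            - c k p l' u * (cmat α β * w α i k u * w β j m' u)) := Finset.sum_comm
      _ = ∑ k, (C k i l' * Wf p j k m' - C k p l' * Wf i j k m') := by
          refine Finset.sum_congr rfl fun k _ => ?_
          simp only [hWf, hC, Finset.mul_sum, ← Finset.sum_sub_distrib]
          try exact Finset.sum_congr rfl fun α _ => Finset.sum_congr rfl fun β _ => by ring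
  rw [hWc l m, hWc m l]
  exact rr_core F G C Ga Wf
    (fun a b l' q => pd (c a b q) l' u) (fun a b l' q => pd (Γ a b q) l' u)
    hFG hGsym hM hcyc hN hpdC hpdGa i j p l m
end

section
/- Let $n \geq 1$ and let $w^i_\alpha$, $r^{ij}$ be smooth functions on an open set of $\mathbb{R}^n$, with a symmetric constant matrix $c^{\alpha\beta}$, and set $\Gamma^{ij}_k := \partial_k r^{ij} - c^{\alpha\beta}\,\partial_k w^i_\alpha\, w^j_\beta$. Suppose that the flux families pairwise commute: $\partial_p r^{ik}\,\partial_j r^{ph} = \partial_p r^{ih}\,\partial_j r^{pk}$, $\partial_p r^{ik}\,\partial_j w^p_\alpha = \partial_p w^i_\alpha\,\partial_j r^{pk}$, and $\partial_p w^i_\alpha\,\partial_j w^p_\beta = \partial_p w^i_\beta\,\partial_j w^p_\alpha$ for all indices. Then the associativity condition $\Gamma^{ij}_s \Gamma^{sk}_l = \Gamma^{ik}_s \Gamma^{sj}_l$ holds for all $i,j,k,l$. -/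
open Finset

private lemma assoc_expand {N I : Type} [Fintype N] [Fintype I]
    (a A : N → N → ℝ) (v V W : I → N → ℝ) (c : I → I → ℝ)
    (H2 : ∀ j γ, ∑ s, a j s * V γ s = ∑ s, v γ s * A s j)
    (j k : N) :
    ∑ s, (a j s - ∑ α, ∑ β, c α β * v α s * W β j) *
        (A s k - ∑ γ, ∑ δ, c γ δ * V γ s * W δ k)
    = (∑ s, a j s * A s k)
      - (∑ q : I × I, c q.1 q.2 * W q.2 k * ∑ s, v q.1 s * A s j)
      - (∑ p : I × I, c p.1 p.2 * W p.2 j * ∑ s, v p.1 s * A s k)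
      + ∑ p : I × I, ∑ q : I × I,
          c p.1 p.2 * c q.1 q.2 * W p.2 j * W q.2 k * ∑ s, v p.1 s * V q.1 s := by
  have hP : ∀ s (j : N), (∑ α, ∑ β, c α β * v α s * W β j)
      = ∑ p : I × I, c p.1 p.2 * v p.1 s * W p.2 j := by
    intro s j; rw [Fintype.sum_prod_type]
  have hQ : ∀ s (k : N), (∑ γ, ∑ δ, c γ δ * V γ s * W δ k)
      = ∑ q : I × I, c q.1 q.2 * V q.1 s * W q.2 k := by
    intro s k; rw [Fintype.sum_prod_type]
  have e1 : ∑ x, (∑ p : I × I, c p.1 p.2 * v p.1 x * W p.2 j) * A x k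
      = ∑ p : I × I, c p.1 p.2 * W p.2 j * ∑ s, v p.1 s * A s k := by
    simp only [Finset.sum_mul, Finset.mul_sum]
    rw [Finset.sum_comm]
    exact Finset.sum_congr rfl fun p _ => Finset.sum_congr rfl fun x _ => by ring
  have e2 : ∑ x, a j x * (∑ q : I × I, c q.1 q.2 * V q.1 x * W q.2 k)
      = ∑ q : I × I, c q.1 q.2 * W q.2 k * ∑ s, v q.1 s * A s j := by
    simp only [Finset.mul_sum]
    rw [Finset.sum_comm]
    refine Finset.sum_congr rfl fun q _ => ?_
    calc ∑ x, a j x * (c q.1 q.2 * V q.1 x * W q.2 k)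
        = c q.1 q.2 * W q.2 k * ∑ x, a j x * V q.1 x := by
          rw [Finset.mul_sum]
          exact Finset.sum_congr rfl fun x _ => by ring
      _ = c q.1 q.2 * W q.2 k * ∑ x, v q.1 x * A x j := by rw [H2]
      _ = ∑ x, c q.1 q.2 * W q.2 k * (v q.1 x * A x j) := by rw [Finset.mul_sum]
  have e3 : ∑ x, (∑ p : I × I, c p.1 p.2 * v p.1 x * W p.2 j) *
        (∑ q : I × I, c q.1 q.2 * V q.1 x * W q.2 k)
      = ∑ p : I × I, ∑ q : I × I,
          c p.1 p.2 * c q.1 q.2 * W p.2 j * W q.2 k * ∑ s, v p.1 s * V q.1 s := by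
    simp only [Finset.sum_mul, Finset.mul_sum]
    rw [Finset.sum_comm]
    conv_rhs => rw [Finset.sum_comm]
    refine Finset.sum_congr rfl fun q _ => ?_
    rw [Finset.sum_comm]
    exact Finset.sum_congr rfl fun p _ => Finset.sum_congr rfl fun x _ => by ring
  simp only [hP, hQ, sub_mul, mul_sub, Finset.sum_sub_distrib, e1, e2, e3]
  ring

private lemma assoc_key {N I : Type} [Fintype N] [Fintype I]
    (a A : N → N → ℝ) (v V W : I → N → ℝ) (c : I → I → ℝ)
    (H1 : ∀ j k, ∑ s, a j s * A s k = ∑ s, a k s * A s j)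
    (H2 : ∀ j γ, ∑ s, a j s * V γ s = ∑ s, v γ s * A s j)
    (H3 : ∀ α γ, ∑ s, v α s * V γ s = ∑ s, v γ s * V α s)
    (j k : N) :
    ∑ s, (a j s - ∑ α, ∑ β, c α β * v α s * W β j) *
        (A s k - ∑ γ, ∑ δ, c γ δ * V γ s * W δ k)
    = ∑ s, (a k s - ∑ α, ∑ β, c α β * v α s * W β k) *
        (A s j - ∑ γ, ∑ δ, c γ δ * V γ s * W δ j) := by
  rw [assoc_expand a A v V W c H2 j k, assoc_expand a A v V W c H2 k j, H1 j k]
  have h4 : (∑ p : I × I, ∑ q : I × I,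
        c p.1 p.2 * c q.1 q.2 * W p.2 j * W q.2 k * ∑ s, v p.1 s * V q.1 s)
      = ∑ p : I × I, ∑ q : I × I,
        c p.1 p.2 * c q.1 q.2 * W p.2 k * W q.2 j * ∑ s, v p.1 s * V q.1 s := by
    rw [Finset.sum_comm]
    refine Finset.sum_congr rfl fun p _ => Finset.sum_congr rfl fun q _ => ?_
    rw [H3 q.1 p.1]
    ring
  rw [h4]
  ring

/-- Propositions 3.13–3.14 with Corollary 3.6: commutativity of the
velocity matrices of the flux families `r^{·k}` and `w^·_α` implies the associativity
identity `Γ^{ij}_s Γ^{sk}_l = Γ^{ik}_s Γ^{sj}_l` for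
`Γ^{ij}_k = ∂_k r^{ij} - c^{αβ} (∂_k w^i_α) w^j_β`. -/
theorem commuting_fluxes_imply_associativity
    (n : ℕ) (hn : 1 ≤ n)
    (ι : Type) [Fintype ι]
    (U : Set (Fin n → ℝ)) (hU : IsOpen U)
    (wpot : ι → Fin n → (Fin n → ℝ) → ℝ)
    (r : Fin n → Fin n → (Fin n → ℝ) → ℝ)
    (cmat : ι → ι → ℝ) (hcmat : ∀ α β, cmat α β = cmat β α)
    (Γ : Fin n → Fin n → Fin n → (Fin n → ℝ) → ℝ)
    (hws : ∀ α i, ContDiffOn ℝ (⊤ : ℕ∞) (wpot α i) U)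
    (hrs : ∀ i j, ContDiffOn ℝ (⊤ : ℕ∞) (r i j) U)
    -- Γ^{ij}_k := ∂_k r^{ij} - c^{αβ} (∂_k w^i_α) w^j_β
    (hΓ : ∀ i j k, ∀ u ∈ U,
      Γ i j k u = pd (r i j) k u - ∑ α, ∑ β, cmat α β * pd (wpot α i) k u * wpot β j u)
    -- commutativity of the flux families
    (hrr : ∀ i k h j, ∀ u ∈ U,
      ∑ p, pd (r i k) p u * pd (r p h) j u = ∑ p, pd (r i h) p u * pd (r p k) j u)
    (hrw : ∀ i k α j, ∀ u ∈ U,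
      ∑ p, pd (r i k) p u * pd (wpot α p) j u = ∑ p, pd (wpot α i) p u * pd (r p k) j u)
    (hww : ∀ i α β j, ∀ u ∈ U,
      ∑ p, pd (wpot α i) p u * pd (wpot β p) j u
        = ∑ p, pd (wpot β i) p u * pd (wpot α p) j u) :
    ∀ i j k l, ∀ u ∈ U,
      ∑ s, Γ i j s u * Γ s k l u = ∑ s, Γ i k s u * Γ s j l u := by
  intro i j k l u hu
  set a : Fin n → Fin n → ℝ := fun j' s => pd (r i j') s u with ha
  set A : Fin n → Fin n → ℝ := fun s k' => pd (r s k') l u with hA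
  set v : ι → Fin n → ℝ := fun α s => pd (wpot α i) s u with hv
  set V : ι → Fin n → ℝ := fun γ s => pd (wpot γ s) l u with hV
  set W : ι → Fin n → ℝ := fun β j' => wpot β j' u with hW
  have key := assoc_key a A v V W cmat
    (fun j' k' => hrr i j' k' l u hu)
    (fun j' γ => hrw i j' γ l u hu)
    (fun α γ => hww i α γ l u hu) j k
  calc ∑ s, Γ i j s u * Γ s k l u
      = ∑ s, (a j s - ∑ α, ∑ β, cmat α β * v α s * W β j) *
          (A s k - ∑ γ, ∑ δ, cmat γ δ * V γ s * W δ k) :=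
        Finset.sum_congr rfl fun s _ => by rw [hΓ i j s u hu, hΓ s k l u hu]
    _ = ∑ s, (a k s - ∑ α, ∑ β, cmat α β * v α s * W β k) *
          (A s j - ∑ γ, ∑ δ, cmat γ δ * V γ s * W δ j) := key
    _ = ∑ s, Γ i k s u * Γ s j l u :=
        (Finset.sum_congr rfl fun s _ => by rw [hΓ i k s u hu, hΓ s j l u hu]).symm
end

section
/- Consider $n = 2$, coordinates $(u^1,u^2)$. For the hyperbolic Monge–Ampère system $u^1_t = u^2_x$, $u^2_t = \big(((u^2)^2-1)/u^1\big)_x$ on $\{u^1 \neq 0\}$, let $V^1 = u^2$ and $V^2 = ((u^2)^2-1)/u^1$, and let $f_{ij}$, $c_{ijk}$ be as in the Monge–Ampère example ($f = \psi^\top\phi\psi$ with $\psi = \begin{pmatrix}1 & 0\\ -u^2 & u^1\end{pmatrix}$, $\phi = \begin{pmatrix}0 & 1\\ 1 & 0\end{pmatrix}$, $c_{ijk} = \tfrac13(\partial_j f_{ik} - \partial_k f_{ij})$). Then the system is Hamiltonian with respect to the third-order operator in the sense that: $f_{im}\,\partial_j V^m = f_{jm}\,\partial_i V^m$ and $f_{ks}\,\partial_i\partial_j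 V^k = c_{smj}\,\partial_i V^m + c_{smi}\,\partial_j V^m$ for all $i,j,s \in \{1,2\}$. -/
noncomputable def P (i : Fin 2) : (Fin 2 → ℝ) →L[ℝ] ℝ := ContinuousLinearMap.proj i

lemma hP (i : Fin 2) (u : Fin 2 → ℝ) : HasFDerivAt (fun v : Fin 2 → ℝ => v i) (P i) u :=
  (P i).hasFDerivAt

lemma pd_eq {f : (Fin 2 → ℝ) → ℝ} {L : (Fin 2 → ℝ) →L[ℝ] ℝ} {u : Fin 2 → ℝ}
    (h : HasFDerivAt f L u) (k : Fin 2) : pd f k u = L (Pi.single k 1) := by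
  rw [pd, h.fderiv]

lemma pd_const (cst : ℝ) (k : Fin 2) (u : Fin 2 → ℝ) : pd (fun _ : Fin 2 → ℝ => cst) k u = 0 := by
  simp [pd]

lemma pd_coord (i k : Fin 2) (u : Fin 2 → ℝ) :
    pd (fun v : Fin 2 → ℝ => v i) k u = if k = i then 1 else 0 := by
  rw [pd_eq (hP i u) k]
  simp [P, Pi.single_apply, eq_comm]

lemma pd2_coord (i j k : Fin 2) (u : Fin 2 → ℝ) :
    pd (fun v => pd (fun w : Fin 2 → ℝ => w i) j v) k u = 0 := by
  have : (fun v => pd (fun w : Fin 2 → ℝ => w i) j v)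
      = (fun _ : Fin 2 → ℝ => if j = i then (1:ℝ) else 0) :=
    funext fun v => pd_coord i j v
  rw [this, pd_const]

/-- the flux `V¹` -/
noncomputable def G : (Fin 2 → ℝ) → ℝ := fun v => (v 1 * v 1 - 1) * (v 0)⁻¹

noncomputable def W0 : (Fin 2 → ℝ) → ℝ := fun v => (1 - v 1 * v 1) * (v 0 * v 0)⁻¹
noncomputable def W1 : (Fin 2 → ℝ) → ℝ := fun v => (v 1 + v 1) * (v 0)⁻¹

lemma hG (v : Fin 2 → ℝ) (hv : v 0 ≠ 0) :
    HasFDerivAt G ((v 1 * v 1 - 1) • ((-(v 0 ^ 2)⁻¹) • P 0)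
      + (v 0)⁻¹ • (v 1 • P 1 + v 1 • P 1)) v := by
  have hc : HasFDerivAt (fun w : Fin 2 → ℝ => w 1 * w 1 - 1) (v 1 • P 1 + v 1 • P 1) v :=
    ((hP 1 v).mul (hP 1 v)).sub_const 1
  have hd : HasFDerivAt (fun w : Fin 2 → ℝ => (w 0)⁻¹) ((-(v 0 ^ 2)⁻¹) • P 0) v :=
    (hasDerivAt_inv hv).comp_hasFDerivAt v (hP 0 v)
  exact hc.mul hd

lemma pdG0 (v : Fin 2 → ℝ) (hv : v 0 ≠ 0) : pd G 0 v = W0 v := by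
  rw [pd_eq (hG v hv) 0]
  simp [P, W0, Pi.single_apply]
  rw [pow_two]
  ring

lemma pdG1 (v : Fin 2 → ℝ) (hv : v 0 ≠ 0) : pd G 1 v = W1 v := by
  rw [pd_eq (hG v hv) 1]
  simp [P, W1, Pi.single_apply]
  ring

lemma open_ne : IsOpen {v : Fin 2 → ℝ | v 0 ≠ 0} :=
  isOpen_compl_singleton.preimage (continuous_apply 0)

lemma pdpdG0 (i : Fin 2) (u : Fin 2 → ℝ) (hu : u 0 ≠ 0) :
    pd (fun v => pd G 0 v) i u = pd W0 i u := by
  unfold pd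
  congr 1
  apply Filter.EventuallyEq.fderiv_eq
  exact Filter.eventuallyEq_of_mem (open_ne.mem_nhds hu) fun v hv => pdG0 v hv

lemma pdpdG1 (i : Fin 2) (u : Fin 2 → ℝ) (hu : u 0 ≠ 0) :
    pd (fun v => pd G 1 v) i u = pd W1 i u := by
  unfold pd
  congr 1
  apply Filter.EventuallyEq.fderiv_eq
  exact Filter.eventuallyEq_of_mem (open_ne.mem_nhds hu) fun v hv => pdG1 v hv

lemma hW0 (v : Fin 2 → ℝ) (hv : v 0 ≠ 0) :
    HasFDerivAt W0 ((1 - v 1 * v 1) • ((-((v 0 * v 0) ^ 2)⁻¹) • (v 0 • P 0 + v 0 • P 0))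
      + (v 0 * v 0)⁻¹ • (-(v 1 • P 1 + v 1 • P 1))) v := by
  have hc : HasFDerivAt (fun w : Fin 2 → ℝ => 1 - w 1 * w 1) (-(v 1 • P 1 + v 1 • P 1)) v :=
    ((hP 1 v).mul (hP 1 v)).const_sub 1
  have hsq : HasFDerivAt (fun w : Fin 2 → ℝ => w 0 * w 0) (v 0 • P 0 + v 0 • P 0) v :=
    (hP 0 v).mul (hP 0 v)
  have hd : HasFDerivAt (fun w : Fin 2 → ℝ => (w 0 * w 0)⁻¹)
      ((-((v 0 * v 0) ^ 2)⁻¹) • (v 0 • P 0 + v 0 • P 0)) v :=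
    (hasDerivAt_inv (mul_ne_zero hv hv)).comp_hasFDerivAt v hsq
  exact hc.mul hd

lemma hW1 (v : Fin 2 → ℝ) (hv : v 0 ≠ 0) :
    HasFDerivAt W1 ((v 1 + v 1) • ((-(v 0 ^ 2)⁻¹) • P 0) + (v 0)⁻¹ • (P 1 + P 1)) v := by
  have hc : HasFDerivAt (fun w : Fin 2 → ℝ => w 1 + w 1) (P 1 + P 1) v := (hP 1 v).add (hP 1 v)
  have hd : HasFDerivAt (fun w : Fin 2 → ℝ => (w 0)⁻¹) ((-(v 0 ^ 2)⁻¹) • P 0) v :=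
    (hasDerivAt_inv hv).comp_hasFDerivAt v (hP 0 v)
  exact hc.mul hd

lemma pdW0_0 (v : Fin 2 → ℝ) (hv : v 0 ≠ 0) :
    pd W0 0 v = 2 * (v 1 * v 1 - 1) / (v 0 * v 0 * v 0) := by
  rw [pd_eq (hW0 v hv) 0]
  simp [P, Pi.single_apply]
  field_simp
  ring

lemma pdW0_1 (v : Fin 2 → ℝ) (hv : v 0 ≠ 0) :
    pd W0 1 v = -(2 * v 1) / (v 0 * v 0) := by
  rw [pd_eq (hW0 v hv) 1]
  simp [P, Pi.single_apply]
  field_simp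
  ring

lemma pdW1_0 (v : Fin 2 → ℝ) (hv : v 0 ≠ 0) :
    pd W1 0 v = -(2 * v 1) / (v 0 * v 0) := by
  rw [pd_eq (hW1 v hv) 0]
  simp [P, Pi.single_apply]
  field_simp
  ring

lemma pdW1_1 (v : Fin 2 → ℝ) (hv : v 0 ≠ 0) :
    pd W1 1 v = 2 / v 0 := by
  rw [pd_eq (hW1 v hv) 1]
  simp [P, Pi.single_apply]
  field_simp
  norm_num

lemma pd_f00 (k : Fin 2) (u : Fin 2 → ℝ) :
    pd (fun v : Fin 2 → ℝ => -(2 * v 1)) k u = if k = 1 then -2 else 0 := by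
  rw [pd_eq (f := fun v : Fin 2 → ℝ => -(2 * v 1)) ((hP 1 u).const_mul 2).neg k]
  simp [P, Pi.single_apply, eq_comm]
  split <;> norm_num


/-- the hyperbolic Monge–Ampère system `u¹_t = u²_x`,
`u²_t = (((u²)² - 1)/u¹)_x` with fluxes `V¹ = u²`, `V² = ((u²)² - 1)/u¹` is Hamiltonian
with respect to the third-order operator of the Monge–Ampère example, i.e. conditions
(e1) and (e2) hold on `{u¹ ≠ 0}`. -/
theorem monge_ampere_system_is_hamiltonian
    (ψ : Fin 2 → Fin 2 → (Fin 2 → ℝ) → ℝ)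
    (φ : Fin 2 → Fin 2 → ℝ)
    (f : Fin 2 → Fin 2 → (Fin 2 → ℝ) → ℝ)
    (c : Fin 2 → Fin 2 → Fin 2 → (Fin 2 → ℝ) → ℝ)
    (V : Fin 2 → (Fin 2 → ℝ) → ℝ)
    (hψ : ∀ u : Fin 2 → ℝ, ψ 0 0 u = 1 ∧ ψ 0 1 u = 0 ∧ ψ 1 0 u = -(u 1) ∧ ψ 1 1 u = u 0)
    (hφ : φ 0 0 = 0 ∧ φ 0 1 = 1 ∧ φ 1 0 = 1 ∧ φ 1 1 = 0)
    (hf : ∀ i j u, f i j u = ∑ α, ∑ β, φ α β * ψ α i u * ψ β j u)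
    (hc : ∀ i j k, ∀ u : Fin 2 → ℝ,
      c i j k u = (1/3) * (pd (f i k) j u - pd (f i j) k u))
    (hV : ∀ u : Fin 2 → ℝ, V 0 u = u 1 ∧ V 1 u = ((u 1)^2 - 1) / (u 0)) :
    (∀ i j, ∀ u : Fin 2 → ℝ, u 0 ≠ 0 →
      ∑ m, f i m u * pd (V m) j u = ∑ m, f j m u * pd (V m) i u)
    ∧ (∀ i j s, ∀ u : Fin 2 → ℝ, u 0 ≠ 0 →
      ∑ k, f k s u * pd (fun v => pd (V k) j v) i u
        = ∑ m, (c s m j u * pd (V m) i u + c s m i u * pd (V m) j u)) := by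
  -- explicit forms of f
  have hf00 : f 0 0 = fun v : Fin 2 → ℝ => -(2 * v 1) := funext fun u => by
    rw [hf]
    simp [Fin.sum_univ_two, (hψ u).1, (hψ u).2.1, (hψ u).2.2.1, (hψ u).2.2.2,
      hφ.1, hφ.2.1, hφ.2.2.1, hφ.2.2.2]
    ring
  have hf01 : f 0 1 = fun v : Fin 2 → ℝ => v 0 := funext fun u => by
    rw [hf]
    simp [Fin.sum_univ_two, (hψ u).1, (hψ u).2.1, (hψ u).2.2.1, (hψ u).2.2.2,
      hφ.1, hφ.2.1, hφ.2.2.1, hφ.2.2.2]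
  have hf10 : f 1 0 = fun v : Fin 2 → ℝ => v 0 := funext fun u => by
    rw [hf]
    simp [Fin.sum_univ_two, (hψ u).1, (hψ u).2.1, (hψ u).2.2.1, (hψ u).2.2.2,
      hφ.1, hφ.2.1, hφ.2.2.1, hφ.2.2.2]
  have hf11 : f 1 1 = fun _ : Fin 2 → ℝ => (0:ℝ) := funext fun u => by
    rw [hf]
    simp [Fin.sum_univ_two, (hψ u).1, (hψ u).2.1, (hψ u).2.2.1, (hψ u).2.2.2,
      hφ.1, hφ.2.1, hφ.2.2.1, hφ.2.2.2]
  -- explicit forms of V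
  have hV0 : V 0 = fun v : Fin 2 → ℝ => v 1 := funext fun u => (hV u).1
  have hV1 : V 1 = G := funext fun u => by
    rw [(hV u).2, G, div_eq_mul_inv, pow_two]
  -- values of c
  have hc000 : ∀ u : Fin 2 → ℝ, c 0 0 0 u = 0 := fun u => by
    rw [hc, hf00]; simp [pd_f00]
  have hc001 : ∀ u : Fin 2 → ℝ, c 0 0 1 u = 1 := fun u => by
    rw [hc, hf01, hf00]; simp [pd_f00, pd_coord]; norm_num
  have hc010 : ∀ u : Fin 2 → ℝ, c 0 1 0 u = -1 := fun u => by
    rw [hc, hf00, hf01]; simp [pd_f00, pd_coord]; norm_num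
  have hc011 : ∀ u : Fin 2 → ℝ, c 0 1 1 u = 0 := fun u => by
    rw [hc, hf01]; simp
  have hc100 : ∀ u : Fin 2 → ℝ, c 1 0 0 u = 0 := fun u => by
    rw [hc, hf10]; simp
  have hc101 : ∀ u : Fin 2 → ℝ, c 1 0 1 u = 0 := fun u => by
    rw [hc, hf11, hf10]; simp [pd_const, pd_coord]
  have hc110 : ∀ u : Fin 2 → ℝ, c 1 1 0 u = 0 := fun u => by
    rw [hc, hf10, hf11]; simp [pd_const, pd_coord]
  have hc111 : ∀ u : Fin 2 → ℝ, c 1 1 1 u = 0 := fun u => by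
    rw [hc, hf11]; simp [pd_const]
  constructor
  · intro i j u hu
    fin_cases i <;> fin_cases j <;>
      (simp [Fin.sum_univ_two, hf00, hf01, hf10, hf11, hV0, hV1, pd_coord,
        pdG0 u hu, pdG1 u hu, W0, W1]
       try field_simp
       try ring)
  · intro i j s u hu
    fin_cases i <;> fin_cases j <;> fin_cases s <;>
      (simp [Fin.sum_univ_two, hf00, hf01, hf10, hf11, hV0, hV1, pd_coord, pd2_coord,
        pd_const, pdpdG0 _ u hu, pdpdG1 _ u hu, pdW0_0 u hu, pdW0_1 u hu, pdW1_0 u hu,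
        pdW1_1 u hu, pdG0 u hu, pdG1 u hu, W0, W1,
        hc000, hc001, hc010, hc011, hc100, hc101, hc110, hc111]
       try field_simp
       try ring)
end
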